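/- arXiv:1406.0674 — 6 statements merged into one kernel-verified Lean document; each statement's English description precedes it below -/
import Mathlib

section
/- For ν = λ, the operator D given by D(f,g)(x) = f(x,0) satisfies the functional identity (D F^∨_λ)(x) = |x|^{-2ν} (D F)(-1/x) for all smooth pairs F = (f,g) on ℝ² \ {(0,0)} and all x ∈ ℝ \ {0}. -/
noncomputable section

/-- Twisted inversion for `ℂ²`-valued functions on `ℝ² \ {(0,0)}`. -/
def IsTwInv (lam : ℂ) (F Fv : ℝ × ℝ → ℂ × ℂ) : Prop :=
  ∀ r θ : ℝ, 0 < r →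
    Fv (r * Real.cos θ, r * Real.sin θ) =
      ((r : ℂ) ^ (-2 * lam)) •
        (((Real.cos (2 * θ) : ℂ) * (F (-Real.cos θ / r, Real.sin θ / r)).1
            - (Real.sin (2 * θ) : ℂ) * (F (-Real.cos θ / r, Real.sin θ / r)).2,
          (Real.sin (2 * θ) : ℂ) * (F (-Real.cos θ / r, Real.sin θ / r)).1
            + (Real.cos (2 * θ) : ℂ) * (F (-Real.cos θ / r, Real.sin θ / r)).2) : ℂ × ℂ)

/-- For `ν = λ`, the operator `D(f,g)(x) = f(x,0)` satisfies
`(D F^∨_λ)(x) = |x|^{-2ν} (D F)(-1/x)`. -/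
theorem functional_identity_nu_eq_lam (lam : ℂ) (f g : ℝ × ℝ → ℂ)
    (hf : ContDiffOn ℝ (⊤ : ℕ∞) f {p : ℝ × ℝ | p ≠ (0, 0)})
    (hg : ContDiffOn ℝ (⊤ : ℕ∞) g {p : ℝ × ℝ | p ≠ (0, 0)})
    (Fv : ℝ × ℝ → ℂ × ℂ) (h : IsTwInv lam (fun p => (f p, g p)) Fv) :
    ∀ x : ℝ, x ≠ 0 →
      (Fv (x, 0)).1 = ((|x| : ℝ) : ℂ) ^ (-2 * lam) * f (-1 / x, 0) := by
  intro x hx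
  rcases lt_or_gt_of_ne hx with hneg | hpos
  · have key := h (-x) Real.pi (by linarith)
    simp only [Real.cos_pi, Real.sin_pi, mul_zero, mul_neg_one, neg_neg] at key
    have h2 : (2 : ℝ) * Real.pi = 2 * Real.pi := rfl
    rw [Real.cos_two_pi, Real.sin_two_pi] at key
    have habs : |x| = -x := abs_of_neg hneg
    have harg : -(-1 : ℝ) / -x = -1 / x := by field_simp
    rw [key]
    have hinv : (-x)⁻¹ = -1 / x := by field_simp
    simp [habs, harg, hinv]
  · have key := h x 0 hpos
    simp only [Real.cos_zero, Real.sin_zero, mul_zero, mul_one] at key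
    rw [key]
    have habs : |x| = x := abs_of_pos hpos
    simp [habs, neg_div]
end
end

section
/- For ν = λ + 1, the operator D(f,g)(x) = (∂f/∂x)(x,0) + λ·(∂g/∂y)(x,0) satisfies the functional identity (D F^∨_λ)(x) = |x|^{-2ν} (D F)(-1/x) for all smooth pairs F = (f,g) on ℝ² \ {(0,0)} and all x ∈ ℝ \ {0}. -/
noncomputable section

/-- Partial derivative in the `x`-direction. -/
def pdx (F : ℝ × ℝ → ℂ) : ℝ × ℝ → ℂ := fun p => fderiv ℝ F p (1, 0)

/-- Partial derivative in the `y`-direction. -/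
def pdy (F : ℝ × ℝ → ℂ) : ℝ × ℝ → ℂ := fun p => fderiv ℝ F p (0, 1)

open Complex

namespace TwAux

def S : ℝ × ℝ → ℝ := fun p => p.1 ^ 2 + p.2 ^ 2
def Q : ℝ × ℝ → ℝ × ℝ := fun p => (-p.1 / S p, p.2 / S p)
def CC (lam : ℂ) : ℝ × ℝ → ℂ := fun p => Complex.exp ((-(lam + 1)) * (Real.log (S p) : ℂ))
def G1 (lam : ℂ) (f g : ℝ × ℝ → ℂ) : ℝ × ℝ → ℂ := fun p =>
  CC lam p * (((p.1 ^ 2 - p.2 ^ 2 : ℝ) : ℂ) * f (Q p) - ((2 * p.1 * p.2 : ℝ) : ℂ) * g (Q p))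
def G2 (lam : ℂ) (f g : ℝ × ℝ → ℂ) : ℝ × ℝ → ℂ := fun p =>
  CC lam p * (((2 * p.1 * p.2 : ℝ) : ℂ) * f (Q p) + ((p.1 ^ 2 - p.2 ^ 2 : ℝ) : ℂ) * g (Q p))

lemma cpow_pos_eq {r : ℝ} (hr : 0 < r) (w : ℂ) :
    (r : ℂ) ^ w = Complex.exp (w * (Real.log r : ℂ)) := by
  rw [Complex.cpow_def_of_ne_zero (by exact_mod_cast hr.ne'), Complex.ofReal_log hr.le, mul_comm]

variable {lam : ℂ} {f g : ℝ × ℝ → ℂ} {x : ℝ}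

lemma hS0 (hx : x ≠ 0) : x ^ 2 + 0 ^ 2 ≠ 0 := by
  simpa using pow_ne_zero 2 hx

lemma hqx (hx : x ≠ 0) :
    ((-x / (x ^ 2 + 0 ^ 2) : ℝ), ((0:ℝ) / (x ^ 2 + 0 ^ 2) : ℝ)) = ((-1 / x : ℝ), (0:ℝ)) := by
  have h := hS0 hx
  simp only [Prod.mk.injEq]
  constructor
  · field_simp
    ring
  · simp

lemma smul10 (hx : x ≠ 0) (F : ℝ × ℝ → ℂ) :
    fderiv ℝ F (-1 / x, 0) ((1 / x ^ 2 : ℝ), (0:ℝ)) =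
      ((1 / x ^ 2 : ℝ) : ℂ) * fderiv ℝ F (-1 / x, 0) (1, 0) := by
  have h : ((1 / x ^ 2 : ℝ), (0:ℝ)) = (1 / x ^ 2 : ℝ) • ((1:ℝ), (0:ℝ)) := by
    simp [Prod.smul_mk]
  rw [h, (fderiv ℝ F (-1 / x, 0)).map_smul, Complex.real_smul]

lemma smul01 (hx : x ≠ 0) (F : ℝ × ℝ → ℂ) :
    fderiv ℝ F (-1 / x, 0) ((0:ℝ), (1 / x ^ 2 : ℝ)) =
      ((1 / x ^ 2 : ℝ) : ℂ) * fderiv ℝ F (-1 / x, 0) (0, 1) := by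
  have h : ((0:ℝ), (1 / x ^ 2 : ℝ)) = (1 / x ^ 2 : ℝ) • ((0:ℝ), (1:ℝ)) := by
    simp [Prod.smul_mk]
  rw [h, (fderiv ℝ F (-1 / x, 0)).map_smul, Complex.real_smul]

lemma derivX (hx : x ≠ 0)
    (hfd : DifferentiableAt ℝ f (-1 / x, 0)) (hgd : DifferentiableAt ℝ g (-1 / x, 0)) :
    HasDerivAt (fun t => G1 lam f g (t, 0))
      (Complex.exp ((-(lam + 1)) * (Real.log (x ^ 2) : ℂ)) *
        ((-2 * lam * x) * f (-1 / x, 0) + fderiv ℝ f (-1 / x, 0) (1, 0))) x := by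
  have hs := hS0 hx
  -- derivative of the denominator
  have hd : HasDerivAt (fun t : ℝ => t ^ 2 + 0 ^ 2) (2 * x) x := by
    refine ((hasDerivAt_pow 2 x).add_const ((0:ℝ) ^ 2)).congr_deriv ?_
    norm_num
  -- the exponential factor
  have hA : HasDerivAt (fun t : ℝ => Complex.exp ((-(lam + 1)) * (Real.log (t ^ 2 + 0 ^ 2) : ℂ)))
      (Complex.exp ((-(lam + 1)) * (Real.log (x ^ 2 + 0 ^ 2) : ℂ)) *
        ((-(lam + 1)) * ((2 * x / (x ^ 2 + 0 ^ 2) : ℝ) : ℂ))) x :=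
    (((hd.log hs).ofReal_comp).const_mul (-(lam + 1))).cexp
  -- the curve t ↦ Q (t, 0)
  have hq1 : HasDerivAt (fun t : ℝ => -t / (t ^ 2 + 0 ^ 2)) (1 / x ^ 2) x := by
    have h := ((hasDerivAt_id x).neg).div hd hs
    refine h.congr_deriv ?_
    simp only [Pi.neg_apply, id_eq]
    field_simp
    try ring
  have hq2 : HasDerivAt (fun t : ℝ => (0:ℝ) / (t ^ 2 + 0 ^ 2)) 0 x := by
    simp only [zero_div]
    exact hasDerivAt_const x 0
  have hq : HasDerivAt (fun t : ℝ => ((-t / (t ^ 2 + 0 ^ 2) : ℝ), ((0:ℝ) / (t ^ 2 + 0 ^ 2) : ℝ)))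
      ((1 / x ^ 2 : ℝ), (0:ℝ)) x := hq1.prodMk hq2
  -- f and g along the curve
  have hF : HasDerivAt (fun t : ℝ => f ((-t / (t ^ 2 + 0 ^ 2) : ℝ), ((0:ℝ) / (t ^ 2 + 0 ^ 2) : ℝ)))
      (fderiv ℝ f (-1 / x, 0) ((1 / x ^ 2 : ℝ), (0:ℝ))) x := by
    have h' : HasFDerivAt f (fderiv ℝ f (-1 / x, 0))
        ((fun t : ℝ => ((-t / (t ^ 2 + 0 ^ 2) : ℝ), ((0:ℝ) / (t ^ 2 + 0 ^ 2) : ℝ))) x) := by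
      show HasFDerivAt f _ ((-x / (x ^ 2 + 0 ^ 2) : ℝ), ((0:ℝ) / (x ^ 2 + 0 ^ 2) : ℝ))
      rw [hqx hx]
      exact hfd.hasFDerivAt
    exact h'.comp_hasDerivAt x hq
  have hG : HasDerivAt (fun t : ℝ => g ((-t / (t ^ 2 + 0 ^ 2) : ℝ), ((0:ℝ) / (t ^ 2 + 0 ^ 2) : ℝ)))
      (fderiv ℝ g (-1 / x, 0) ((1 / x ^ 2 : ℝ), (0:ℝ))) x := by
    have h' : HasFDerivAt g (fderiv ℝ g (-1 / x, 0))
        ((fun t : ℝ => ((-t / (t ^ 2 + 0 ^ 2) : ℝ), ((0:ℝ) / (t ^ 2 + 0 ^ 2) : ℝ))) x) := by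
      show HasFDerivAt g _ ((-x / (x ^ 2 + 0 ^ 2) : ℝ), ((0:ℝ) / (x ^ 2 + 0 ^ 2) : ℝ))
      rw [hqx hx]
      exact hgd.hasFDerivAt
    exact h'.comp_hasDerivAt x hq
  -- polynomial coefficients
  have hB : HasDerivAt (fun t : ℝ => ((t ^ 2 - 0 ^ 2 : ℝ) : ℂ)) (((2 * x : ℝ) : ℂ)) x := by
    have h : HasDerivAt (fun t : ℝ => t ^ 2 - 0 ^ 2) (2 * x) x := by
      refine ((hasDerivAt_pow 2 x).sub_const ((0:ℝ) ^ 2)).congr_deriv ?_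
      norm_num
    exact h.ofReal_comp
  have hBc : HasDerivAt (fun t : ℝ => ((2 * t * 0 : ℝ) : ℂ)) (((0:ℝ) : ℂ)) x := by
    have h : HasDerivAt (fun t : ℝ => 2 * t * 0) (0 : ℝ) x := by
      simp only [mul_zero]
      exact hasDerivAt_const x 0
    exact h.ofReal_comp
  have inner := (hB.mul hF).sub (hBc.mul hG)
  have total := hA.mul inner
  have heq : (fun t => G1 lam f g (t, 0)) =
      fun t : ℝ => Complex.exp ((-(lam + 1)) * (Real.log (t ^ 2 + 0 ^ 2) : ℂ)) *
        (((t ^ 2 - 0 ^ 2 : ℝ) : ℂ) *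
            f ((-t / (t ^ 2 + 0 ^ 2) : ℝ), ((0:ℝ) / (t ^ 2 + 0 ^ 2) : ℝ)) -
          ((2 * t * 0 : ℝ) : ℂ) *
            g ((-t / (t ^ 2 + 0 ^ 2) : ℝ), ((0:ℝ) / (t ^ 2 + 0 ^ 2) : ℝ))) := rfl
  rw [heq]
  refine total.congr_deriv ?_
  simp only [Pi.mul_apply, Pi.sub_apply]
  rw [hqx hx, smul10 hx f, smul10 hx g]
  have h0 : ((x:ℝ) ^ 2 + 0 ^ 2) = x ^ 2 := by norm_num
  rw [h0]
  push_cast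
  set Ff := f (-1 / x, 0)
  set Gg := g (-1 / x, 0)
  set Df := fderiv ℝ f (-1 / x, 0) (1, 0)
  set Dg := fderiv ℝ g (-1 / x, 0) (0, 1)
  set E := Complex.exp ((-(lam + 1)) * (Real.log (x ^ 2) : ℂ))
  have hxC : (x : ℂ) ≠ 0 := by exact_mod_cast hx
  field_simp
  ring

lemma derivY (hx : x ≠ 0)
    (hfd : DifferentiableAt ℝ f (-1 / x, 0)) (hgd : DifferentiableAt ℝ g (-1 / x, 0)) :
    HasDerivAt (fun t => G2 lam f g (x, t))
      (Complex.exp ((-(lam + 1)) * (Real.log (x ^ 2) : ℂ)) *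
        ((2 * x) * f (-1 / x, 0) + fderiv ℝ g (-1 / x, 0) (0, 1))) 0 := by
  have hs := hS0 hx
  have hd : HasDerivAt (fun t : ℝ => x ^ 2 + t ^ 2) (0 : ℝ) 0 := by
    have h := (hasDerivAt_pow 2 (0:ℝ)).const_add (x ^ 2)
    refine h.congr_deriv ?_
    norm_num
  have hA : HasDerivAt (fun t : ℝ => Complex.exp ((-(lam + 1)) * (Real.log (x ^ 2 + t ^ 2) : ℂ)))
      (Complex.exp ((-(lam + 1)) * (Real.log (x ^ 2 + 0 ^ 2) : ℂ)) *
        ((-(lam + 1)) * (((0 : ℝ) / (x ^ 2 + 0 ^ 2) : ℝ) : ℂ))) 0 :=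
    (((hd.log hs).ofReal_comp).const_mul (-(lam + 1))).cexp
  have hq1 : HasDerivAt (fun t : ℝ => -x / (x ^ 2 + t ^ 2)) (0 : ℝ) 0 := by
    have h := (hasDerivAt_const (0:ℝ) (-x)).div hd hs
    refine h.congr_deriv ?_
    norm_num
  have hq2 : HasDerivAt (fun t : ℝ => t / (x ^ 2 + t ^ 2)) (1 / x ^ 2) 0 := by
    have h := (hasDerivAt_id (0:ℝ)).div hd hs
    refine h.congr_deriv ?_
    field_simp
    try ring
  have hq : HasDerivAt (fun t : ℝ => ((-x / (x ^ 2 + t ^ 2) : ℝ), (t / (x ^ 2 + t ^ 2) : ℝ)))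
      ((0:ℝ), (1 / x ^ 2 : ℝ)) 0 := hq1.prodMk hq2
  have hqx0 : ((-x / (x ^ 2 + 0 ^ 2) : ℝ), ((0:ℝ) / (x ^ 2 + 0 ^ 2) : ℝ)) = ((-1 / x : ℝ), (0:ℝ)) :=
    hqx hx
  have hF : HasDerivAt (fun t : ℝ => f ((-x / (x ^ 2 + t ^ 2) : ℝ), (t / (x ^ 2 + t ^ 2) : ℝ)))
      (fderiv ℝ f (-1 / x, 0) ((0:ℝ), (1 / x ^ 2 : ℝ))) 0 := by
    have h' : HasFDerivAt f (fderiv ℝ f (-1 / x, 0))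
        ((fun t : ℝ => ((-x / (x ^ 2 + t ^ 2) : ℝ), (t / (x ^ 2 + t ^ 2) : ℝ))) 0) := by
      show HasFDerivAt f _ ((-x / (x ^ 2 + 0 ^ 2) : ℝ), ((0:ℝ) / (x ^ 2 + 0 ^ 2) : ℝ))
      rw [hqx0]
      exact hfd.hasFDerivAt
    exact h'.comp_hasDerivAt 0 hq
  have hG : HasDerivAt (fun t : ℝ => g ((-x / (x ^ 2 + t ^ 2) : ℝ), (t / (x ^ 2 + t ^ 2) : ℝ)))
      (fderiv ℝ g (-1 / x, 0) ((0:ℝ), (1 / x ^ 2 : ℝ))) 0 := by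
    have h' : HasFDerivAt g (fderiv ℝ g (-1 / x, 0))
        ((fun t : ℝ => ((-x / (x ^ 2 + t ^ 2) : ℝ), (t / (x ^ 2 + t ^ 2) : ℝ))) 0) := by
      show HasFDerivAt g _ ((-x / (x ^ 2 + 0 ^ 2) : ℝ), ((0:ℝ) / (x ^ 2 + 0 ^ 2) : ℝ))
      rw [hqx0]
      exact hgd.hasFDerivAt
    exact h'.comp_hasDerivAt 0 hq
  have hB1 : HasDerivAt (fun t : ℝ => ((2 * x * t : ℝ) : ℂ)) (((2 * x : ℝ) : ℂ)) 0 := by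
    have h : HasDerivAt (fun t : ℝ => 2 * x * t) (2 * x : ℝ) 0 := by
      simpa using (hasDerivAt_id (0:ℝ)).const_mul (2 * x)
    exact h.ofReal_comp
  have hB2 : HasDerivAt (fun t : ℝ => ((x ^ 2 - t ^ 2 : ℝ) : ℂ)) (((0:ℝ) : ℂ)) 0 := by
    have h : HasDerivAt (fun t : ℝ => x ^ 2 - t ^ 2) (0 : ℝ) 0 := by
      have h' := (hasDerivAt_pow 2 (0:ℝ)).const_sub (x ^ 2)
      refine h'.congr_deriv ?_
      try norm_num
    exact h.ofReal_comp
  have inner := (hB1.mul hF).add (hB2.mul hG)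
  have total := hA.mul inner
  have heq : (fun t => G2 lam f g (x, t)) =
      fun t : ℝ => Complex.exp ((-(lam + 1)) * (Real.log (x ^ 2 + t ^ 2) : ℂ)) *
        (((2 * x * t : ℝ) : ℂ) *
            f ((-x / (x ^ 2 + t ^ 2) : ℝ), (t / (x ^ 2 + t ^ 2) : ℝ)) +
          ((x ^ 2 - t ^ 2 : ℝ) : ℂ) *
            g ((-x / (x ^ 2 + t ^ 2) : ℝ), (t / (x ^ 2 + t ^ 2) : ℝ))) := rfl
  rw [heq]
  refine total.congr_deriv ?_
  simp only [Pi.mul_apply, Pi.add_apply]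
  rw [hqx0, smul01 hx f, smul01 hx g]
  have h0 : ((x:ℝ) ^ 2 + 0 ^ 2) = x ^ 2 := by norm_num
  rw [h0]
  push_cast
  set Ff := f (-1 / x, 0)
  set Gg := g (-1 / x, 0)
  set Df := fderiv ℝ f (-1 / x, 0) (0, 1)
  set Dg := fderiv ℝ g (-1 / x, 0) (0, 1)
  set E := Complex.exp ((-(lam + 1)) * (Real.log (x ^ 2) : ℂ))
  have hxC : (x : ℂ) ≠ 0 := by exact_mod_cast hx
  field_simp
  try ring

lemma diffG (hx : x ≠ 0)
    (hfd : DifferentiableAt ℝ f (-1 / x, 0)) (hgd : DifferentiableAt ℝ g (-1 / x, 0)) :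
    DifferentiableAt ℝ (G1 lam f g) (x, 0) ∧ DifferentiableAt ℝ (G2 lam f g) (x, 0) := by
  have hs : S (x, 0) ≠ 0 := hS0 hx
  have hSd : DifferentiableAt ℝ S (x, 0) :=
    (differentiableAt_fst.pow 2).add (differentiableAt_snd.pow 2)
  have hQd : DifferentiableAt ℝ Q (x, 0) := by
    have h1 : DifferentiableAt ℝ (fun p : ℝ × ℝ => -p.1 / S p) (x, 0) :=
      (differentiableAt_fst.neg).mul (hSd.inv hs)
    have h2 : DifferentiableAt ℝ (fun p : ℝ × ℝ => p.2 / S p) (x, 0) :=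
      differentiableAt_snd.mul (hSd.inv hs)
    exact h1.prodMk h2
  have hQx : Q (x, 0) = (-1 / x, 0) := hqx hx
  have hfQ : DifferentiableAt ℝ (fun p : ℝ × ℝ => f (Q p)) (x, 0) := by
    refine DifferentiableAt.comp _ ?_ hQd
    rw [hQx]; exact hfd
  have hgQ : DifferentiableAt ℝ (fun p : ℝ × ℝ => g (Q p)) (x, 0) := by
    refine DifferentiableAt.comp _ ?_ hQd
    rw [hQx]; exact hgd
  have hCd : DifferentiableAt ℝ (CC lam) (x, 0) := by
    have hlogd : DifferentiableAt ℝ (fun p : ℝ × ℝ => Real.log (S p)) (x, 0) := hSd.log hs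
    have hlogC : DifferentiableAt ℝ (fun p : ℝ × ℝ => ((Real.log (S p) : ℝ) : ℂ)) (x, 0) :=
      Complex.ofRealCLM.differentiableAt.comp _ hlogd
    exact (hlogC.const_mul (-(lam + 1))).cexp
  have hP1 : DifferentiableAt ℝ (fun p : ℝ × ℝ => ((p.1 ^ 2 - p.2 ^ 2 : ℝ) : ℂ)) (x, 0) :=
    Complex.ofRealCLM.differentiableAt.comp _
      ((differentiableAt_fst.pow 2).sub (differentiableAt_snd.pow 2))
  have hP2 : DifferentiableAt ℝ (fun p : ℝ × ℝ => ((2 * p.1 * p.2 : ℝ) : ℂ)) (x, 0) :=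
    Complex.ofRealCLM.differentiableAt.comp _
      (((differentiableAt_const 2).mul differentiableAt_fst).mul differentiableAt_snd)
  constructor
  · exact hCd.mul ((hP1.mul hfQ).sub (hP2.mul hgQ))
  · exact hCd.mul ((hP2.mul hfQ).add (hP1.mul hgQ))

lemma cartesian (lam : ℂ) (f g : ℝ × ℝ → ℂ) (Fv : ℝ × ℝ → ℂ × ℂ)
    (h : IsTwInv lam (fun p => (f p, g p)) Fv) :
    ∀ p : ℝ × ℝ, p ≠ (0, 0) → Fv p = (G1 lam f g p, G2 lam f g p) := by
  intro p hp
  set z : ℂ := ⟨p.1, p.2⟩ with hzdef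
  have hz : z ≠ 0 := by
    simp only [hzdef, ne_eq, Complex.ext_iff, Complex.zero_re, Complex.zero_im, not_and]
    intro h1 h2
    exact hp (Prod.ext h1 h2)
  set r : ℝ := ‖z‖ with hrdef
  set θ : ℝ := z.arg with hθdef
  have hr : 0 < r := norm_pos_iff.mpr hz
  have hzz := Complex.norm_mul_cos_add_sin_mul_I z
  rw [← Complex.ofReal_cos, ← Complex.ofReal_sin] at hzz
  have h1 : r * Real.cos θ = p.1 := by
    rw [hθdef, Complex.cos_arg hz, hrdef]
    have : z.re = p.1 := rfl
    rw [this]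
    field_simp
  have h2 : r * Real.sin θ = p.2 := by
    rw [hθdef, Complex.sin_arg, hrdef]
    have : z.im = p.2 := rfl
    rw [this]
    field_simp
  have hpy := Real.sin_sq_add_cos_sq θ
  have hS : S p = r ^ 2 := by
    show p.1 ^ 2 + p.2 ^ 2 = r ^ 2
    calc p.1 ^ 2 + p.2 ^ 2 = (r * Real.cos θ) ^ 2 + (r * Real.sin θ) ^ 2 := by rw [h1, h2]
    _ = r ^ 2 * (Real.sin θ ^ 2 + Real.cos θ ^ 2) := by ring
    _ = r ^ 2 := by rw [hpy]; ring
  have key := h r θ hr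
  rw [h1, h2] at key
  have hQ : (-Real.cos θ / r, Real.sin θ / r) = Q p := by
    have hc : Real.cos θ = p.1 / r := by rw [← h1]; field_simp
    have hs : Real.sin θ = p.2 / r := by rw [← h2]; field_simp
    simp only [Q, hS, hc, hs, Prod.mk.injEq]
    constructor <;> simp [div_div, neg_div, sq]
  rw [hQ] at key
  rw [key]
  -- identities for powers
  have hlog : (Real.log (S p) : ℂ) = 2 * (Real.log r : ℂ) := by
    rw [hS, Real.log_pow]; push_cast; ring
  have hexpr : Complex.exp ((-2 : ℂ) * (Real.log r : ℂ)) = ((r : ℂ) ^ 2)⁻¹ := by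
    have : ((-2 : ℤ) : ℂ) = (-2 : ℂ) := by norm_num
    rw [← this, Complex.exp_int_mul]
    rw [← Complex.ofReal_exp, Real.exp_log hr, zpow_neg]
    norm_num [zpow_two, sq]
  have hCC : CC lam p = (r : ℂ) ^ (-2 * lam) * ((r : ℂ) ^ 2)⁻¹ := by
    rw [CC, hlog, cpow_pos_eq hr, ← hexpr, ← Complex.exp_add]
    ring_nf
  have hc : Real.cos θ = p.1 / r := by rw [← h1]; field_simp
  have hs : Real.sin θ = p.2 / r := by rw [← h2]; field_simp
  have hcos2 : (Real.cos (2 * θ) : ℂ) = ((p.1 : ℂ) ^ 2 - (p.2 : ℂ) ^ 2) / (r : ℂ) ^ 2 := by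
    rw [Real.cos_two_mul', hc, hs]; push_cast; ring
  have hsin2 : (Real.sin (2 * θ) : ℂ) = 2 * (p.1 : ℂ) * (p.2 : ℂ) / (r : ℂ) ^ 2 := by
    rw [Real.sin_two_mul, hc, hs]; push_cast; ring
  have hrC : (r : ℂ) ≠ 0 := by exact_mod_cast hr.ne'
  ext
  · show ((r : ℂ) ^ (-2 * lam)) * _ = G1 lam f g p
    rw [G1, hCC, hcos2, hsin2]
    push_cast
    field_simp
    try ring
  · show ((r : ℂ) ^ (-2 * lam)) * _ = G2 lam f g p
    rw [G2, hCC, hcos2, hsin2]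
    push_cast
    field_simp
    try ring

end TwAux

/-- For `ν = λ + 1`, the operator `D(f,g)(x) = (∂f/∂x)(x,0) + λ (∂g/∂y)(x,0)` satisfies
`(D F^∨_λ)(x) = |x|^{-2ν} (D F)(-1/x)`. -/
theorem functional_identity_nu_eq_lam_add_one (lam : ℂ) (f g : ℝ × ℝ → ℂ)
    (hf : ContDiffOn ℝ (⊤ : ℕ∞) f {p : ℝ × ℝ | p ≠ (0, 0)})
    (hg : ContDiffOn ℝ (⊤ : ℕ∞) g {p : ℝ × ℝ | p ≠ (0, 0)})
    (Fv : ℝ × ℝ → ℂ × ℂ) (h : IsTwInv lam (fun p => (f p, g p)) Fv) :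
    ∀ x : ℝ, x ≠ 0 →
      pdx (fun p => (Fv p).1) (x, 0) + lam * pdy (fun p => (Fv p).2) (x, 0)
        = ((|x| : ℝ) : ℂ) ^ (-2 * (lam + 1)) *
            (pdx f (-1 / x, 0) + lam * pdy g (-1 / x, 0)) := by
  intro x hx
  have key := TwAux.cartesian lam f g Fv h
  have hne : (-1 / x : ℝ) ≠ 0 := by simp [hx]
  have hq0ne : ((-1 / x : ℝ), (0:ℝ)) ≠ ((0:ℝ), (0:ℝ)) := fun hq => hne (congrArg Prod.fst hq)
  have hmem : {p : ℝ × ℝ | p ≠ (0, 0)} ∈ nhds ((-1 / x : ℝ), (0:ℝ)) := isOpen_ne.mem_nhds hq0ne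
  have hfd : DifferentiableAt ℝ f (-1 / x, 0) := (hf.contDiffAt hmem).differentiableAt (by simp)
  have hgd : DifferentiableAt ℝ g (-1 / x, 0) := (hg.contDiffAt hmem).differentiableAt (by simp)
  have hxo : ((x:ℝ), (0:ℝ)) ≠ ((0:ℝ), (0:ℝ)) := fun hq => hx (congrArg Prod.fst hq)
  have hmemx : {p : ℝ × ℝ | p ≠ (0, 0)} ∈ nhds ((x:ℝ), (0:ℝ)) := isOpen_ne.mem_nhds hxo
  have hev1 : (fun p => (Fv p).1) =ᶠ[nhds ((x:ℝ), (0:ℝ))] TwAux.G1 lam f g := by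
    filter_upwards [hmemx] with p hp
    rw [key p hp]
  have hev2 : (fun p => (Fv p).2) =ᶠ[nhds ((x:ℝ), (0:ℝ))] TwAux.G2 lam f g := by
    filter_upwards [hmemx] with p hp
    rw [key p hp]
  have hD := TwAux.diffG (lam := lam) hx hfd hgd
  have hcurveX : HasDerivAt (fun t : ℝ => ((t : ℝ), (0:ℝ))) ((1:ℝ), (0:ℝ)) x :=
    (hasDerivAt_id x).prodMk (hasDerivAt_const x 0)
  have hcompX := (hD.1.hasFDerivAt).comp_hasDerivAt x hcurveX
  have hX := (TwAux.derivX (lam := lam) hx hfd hgd).unique hcompX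
  have hcurveY : HasDerivAt (fun t : ℝ => ((x:ℝ), (t:ℝ))) ((0:ℝ), (1:ℝ)) 0 :=
    (hasDerivAt_const 0 x).prodMk (hasDerivAt_id 0)
  have hcompY := (hD.2.hasFDerivAt).comp_hasDerivAt 0 hcurveY
  have hY := (TwAux.derivY (lam := lam) hx hfd hgd).unique hcompY
  have hax : (0:ℝ) < |x| := abs_pos.2 hx
  have hcp : ((|x| : ℝ) : ℂ) ^ (-2 * (lam + 1)) =
      Complex.exp ((-(lam + 1)) * (Real.log (x ^ 2) : ℂ)) := by
    rw [TwAux.cpow_pos_eq hax, Real.log_abs]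
    congr 1
    have hl : Real.log (x ^ 2) = 2 * Real.log x := by
      rw [Real.log_pow]; push_cast; ring
    rw [hl]; push_cast; ring
  simp only [pdx, pdy]
  rw [hev1.fderiv_eq, hev2.fderiv_eq, ← hX, ← hY, hcp]
  ring
end
end

section
/- For ν = λ + 2, the operator D(f,g)(x) = 2(2λ+1)·(∂²f/∂x∂y)(x,0) + (λ−1)·(∂²g/∂x²)(x,0) + (λ+1)(2λ+1)·(∂²g/∂y²)(x,0) satisfies (D F^∨_λ)(x) = |x|^{-2ν} (D F)(-1/x) for all smooth pairs F = (f,g) on ℝ² \ {(0,0)} and all x ∈ ℝ \ {0}. -/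
noncomputable section

namespace AuxTw

open Complex

def U : Set (ℝ × ℝ) := {p : ℝ × ℝ | p ≠ (0, 0)}

lemma isOpen_U : IsOpen U := isOpen_compl_singleton

lemma mem_U {p : ℝ × ℝ} : p ∈ U ↔ p ≠ (0, 0) := Iff.rfl

def sq2 (p : ℝ × ℝ) : ℝ := p.1 ^ 2 + p.2 ^ 2

lemma sq2_pos {p : ℝ × ℝ} (hp : p ∈ U) : 0 < sq2 p := by
  rcases p with ⟨a, b⟩
  have : a ≠ 0 ∨ b ≠ 0 := by
    by_contra hc
    push_neg at hc
    exact hp (by simp [hc.1, hc.2, Prod.ext_iff])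
  rcases this with h | h <;> [exact add_pos_of_pos_of_nonneg (by positivity) (by positivity);
    exact add_pos_of_nonneg_of_pos (by positivity) (by positivity)]

def iv (p : ℝ × ℝ) : ℝ × ℝ := (-p.1 / sq2 p, p.2 / sq2 p)

lemma iv_mem {p : ℝ × ℝ} (hp : p ∈ U) : iv p ∈ U := by
  have hs := sq2_pos hp
  intro hiv
  have h1 : -p.1 / sq2 p = 0 := congrArg Prod.fst hiv
  have h2 : p.2 / sq2 p = 0 := congrArg Prod.snd hiv
  have hp1 : p.1 = 0 := by field_simp at h1; linarith [h1]
  have hp2 : p.2 = 0 := by field_simp at h2; simpa using h2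
  exact hp (by simp [hp1, hp2, Prod.ext_iff])

lemma contDiffOn_sq2 : ContDiffOn ℝ (⊤ : ℕ∞) sq2 U :=
  ((contDiff_fst.pow 2).add (contDiff_snd.pow 2)).contDiffOn

lemma contDiffOn_iv : ContDiffOn ℝ (⊤ : ℕ∞) iv U := by
  apply ContDiffOn.prodMk
  · exact ContDiffOn.div (contDiff_fst.neg.contDiffOn) contDiffOn_sq2
      (fun p hp => (sq2_pos hp).ne')
  · exact ContDiffOn.div (contDiff_snd.contDiffOn) contDiffOn_sq2
      (fun p hp => (sq2_pos hp).ne')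

/-- Smoothness of `p ↦ (σ p : ℂ) ^ c` for positive real `σ`. -/
lemma contDiffOn_cpow_real (c : ℂ) {σ : ℝ × ℝ → ℝ} (hσ : ContDiffOn ℝ (⊤ : ℕ∞) σ U)
    (hpos : ∀ p ∈ U, 0 < σ p) :
    ContDiffOn ℝ (⊤ : ℕ∞) (fun p => ((σ p : ℝ) : ℂ) ^ c) U := by
  intro p hp
  have h1 : ContDiffAt ℝ (⊤ : ℕ∞) σ p := hσ.contDiffAt (isOpen_U.mem_nhds hp)
  have h2 : ContDiffAt ℝ (⊤ : ℕ∞) (fun p => ((σ p : ℝ) : ℂ)) p :=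
    Complex.ofRealCLM.contDiff.contDiffAt.comp p h1
  have h3 : AnalyticAt ℂ (fun z : ℂ => z ^ c) ((σ p : ℝ) : ℂ) := by
    apply AnalyticAt.cpow analyticAt_id analyticAt_const
    rw [Complex.mem_slitPlane_iff]
    left
    simpa using hpos p hp
  have h4 : ContDiffAt ℝ (⊤ : ℕ∞) (fun z : ℂ => z ^ c) ((σ p : ℝ) : ℂ) :=
    (h3.contDiffAt).restrict_scalars ℝ
  exact (h4.comp p h2).contDiffWithinAt

def G1 (lam : ℂ) (f g : ℝ × ℝ → ℂ) (p : ℝ × ℝ) : ℂ :=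
  ((sq2 p : ℝ) : ℂ) ^ (-lam - 1) *
    (((p.1 : ℂ) ^ 2 - (p.2 : ℂ) ^ 2) * f (iv p) - 2 * (p.1 : ℂ) * (p.2 : ℂ) * g (iv p))

def G2 (lam : ℂ) (f g : ℝ × ℝ → ℂ) (p : ℝ × ℝ) : ℂ :=
  ((sq2 p : ℝ) : ℂ) ^ (-lam - 1) *
    (2 * (p.1 : ℂ) * (p.2 : ℂ) * f (iv p) + ((p.1 : ℂ) ^ 2 - (p.2 : ℂ) ^ 2) * g (iv p))

lemma contDiffOn_G1 {lam : ℂ} {f g : ℝ × ℝ → ℂ} (hf : ContDiffOn ℝ (⊤ : ℕ∞) f U)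
    (hg : ContDiffOn ℝ (⊤ : ℕ∞) g U) : ContDiffOn ℝ (⊤ : ℕ∞) (G1 lam f g) U := by
  apply ContDiffOn.mul
  · exact contDiffOn_cpow_real _ contDiffOn_sq2 (fun p hp => sq2_pos hp)
  · apply ContDiffOn.sub
    · exact ContDiffOn.mul
        (((Complex.ofRealCLM.contDiff.comp contDiff_fst).pow 2).sub
          ((Complex.ofRealCLM.contDiff.comp contDiff_snd).pow 2)).contDiffOn
        (hf.comp contDiffOn_iv (fun p hp => iv_mem hp))
    · exact ContDiffOn.mul
        ((contDiff_const.mul (Complex.ofRealCLM.contDiff.comp contDiff_fst)).mul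
          (Complex.ofRealCLM.contDiff.comp contDiff_snd)).contDiffOn
        (hg.comp contDiffOn_iv (fun p hp => iv_mem hp))

lemma contDiffOn_G2 {lam : ℂ} {f g : ℝ × ℝ → ℂ} (hf : ContDiffOn ℝ (⊤ : ℕ∞) f U)
    (hg : ContDiffOn ℝ (⊤ : ℕ∞) g U) : ContDiffOn ℝ (⊤ : ℕ∞) (G2 lam f g) U := by
  apply ContDiffOn.mul
  · exact contDiffOn_cpow_real _ contDiffOn_sq2 (fun p hp => sq2_pos hp)
  · apply ContDiffOn.add
    · exact ContDiffOn.mul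
        ((contDiff_const.mul (Complex.ofRealCLM.contDiff.comp contDiff_fst)).mul
          (Complex.ofRealCLM.contDiff.comp contDiff_snd)).contDiffOn
        (hf.comp contDiffOn_iv (fun p hp => iv_mem hp))
    · exact ContDiffOn.mul
        (((Complex.ofRealCLM.contDiff.comp contDiff_fst).pow 2).sub
          ((Complex.ofRealCLM.contDiff.comp contDiff_snd).pow 2)).contDiffOn
        (hg.comp contDiffOn_iv (fun p hp => iv_mem hp))

lemma diffAt {F : ℝ × ℝ → ℂ} (hF : ContDiffOn ℝ (⊤ : ℕ∞) F U) {p : ℝ × ℝ} (hp : p ∈ U) :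
    DifferentiableAt ℝ F p :=
  ((hF.contDiffAt (isOpen_U.mem_nhds hp)).differentiableAt (by simp))

lemma pd_contDiffOn {F : ℝ × ℝ → ℂ} (hF : ContDiffOn ℝ (⊤ : ℕ∞) F U) (v : ℝ × ℝ) :
    ContDiffOn ℝ (⊤ : ℕ∞) (fun p => fderiv ℝ F p v) U := by
  have h1 : ContDiffOn ℝ (⊤ : ℕ∞) (fderiv ℝ F) U := hF.fderiv_of_isOpen isOpen_U (by simp)
  exact h1.clm_apply contDiffOn_const

lemma pdx_contDiffOn {F : ℝ × ℝ → ℂ} (hF : ContDiffOn ℝ (⊤ : ℕ∞) F U) :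
    ContDiffOn ℝ (⊤ : ℕ∞) (pdx F) U := pd_contDiffOn hF (1, 0)

lemma pdy_contDiffOn {F : ℝ × ℝ → ℂ} (hF : ContDiffOn ℝ (⊤ : ℕ∞) F U) :
    ContDiffOn ℝ (⊤ : ℕ∞) (pdy F) U := pd_contDiffOn hF (0, 1)

/-- Chain rule along a curve, expressed via `pdx`/`pdy`. -/
lemma hasDerivAt_comp2 (F : ℝ × ℝ → ℂ) {γ₁ γ₂ : ℝ → ℝ} {d₁ d₂ : ℝ} {t : ℝ}
    (h₁ : HasDerivAt γ₁ d₁ t) (h₂ : HasDerivAt γ₂ d₂ t)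
    (hF : DifferentiableAt ℝ F (γ₁ t, γ₂ t)) :
    HasDerivAt (fun s => F (γ₁ s, γ₂ s))
      ((d₁ : ℂ) * pdx F (γ₁ t, γ₂ t) + (d₂ : ℂ) * pdy F (γ₁ t, γ₂ t)) t := by
  have hc : HasDerivAt (fun s => (γ₁ s, γ₂ s)) (d₁, d₂) t := h₁.prodMk h₂
  have h := hF.hasFDerivAt.comp_hasDerivAt t hc
  refine h.congr_deriv (Eq.symm ?_)
  have hv : (d₁, d₂) = d₁ • ((1 : ℝ), (0 : ℝ)) + d₂ • ((0 : ℝ), (1 : ℝ)) := by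
    simp [Prod.ext_iff]
  rw [hv, map_add, map_smul, map_smul]
  simp [pdx, pdy, Complex.real_smul]

lemma hasDerivAt_slice_x {F : ℝ × ℝ → ℂ} {a b : ℝ} (hF : DifferentiableAt ℝ F (a, b)) :
    HasDerivAt (fun t => F (t, b)) (pdx F (a, b)) a := by
  have := hasDerivAt_comp2 F (hasDerivAt_id a) (hasDerivAt_const a b) hF
  simpa using this

lemma hasDerivAt_slice_y {F : ℝ × ℝ → ℂ} {a b : ℝ} (hF : DifferentiableAt ℝ F (a, b)) :
    HasDerivAt (fun t => F (a, t)) (pdy F (a, b)) b := by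
  have := hasDerivAt_comp2 F (hasDerivAt_const b a) (hasDerivAt_id b) hF
  simpa using this

lemma pdx_eq {F : ℝ × ℝ → ℂ} {a b : ℝ} {c : ℂ} (hF : DifferentiableAt ℝ F (a, b))
    (hd : HasDerivAt (fun t => F (t, b)) c a) : pdx F (a, b) = c :=
  (hasDerivAt_slice_x hF).unique hd

lemma pdy_eq {F : ℝ × ℝ → ℂ} {a b : ℝ} {c : ℂ} (hF : DifferentiableAt ℝ F (a, b))
    (hd : HasDerivAt (fun t => F (a, t)) c b) : pdy F (a, b) = c :=
  (hasDerivAt_slice_y hF).unique hd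

/-- `(↑(r²))^w = (↑r)^(2w)` for `r > 0`. -/
lemma cpow_sq {r : ℝ} (hr : 0 < r) (w : ℂ) :
    ((r ^ 2 : ℝ) : ℂ) ^ w = ((r : ℝ) : ℂ) ^ (2 * w) := by
  rw [Complex.cpow_def_of_ne_zero (by exact_mod_cast (pow_ne_zero 2 hr.ne')),
    Complex.cpow_def_of_ne_zero (by exact_mod_cast hr.ne')]
  congr 1
  rw [← Complex.ofReal_log (by positivity), Real.log_pow, ← Complex.ofReal_log hr.le]
  push_cast
  ring

end AuxTw

namespace AuxTw

open Complex

lemma Fv_eq {lam : ℂ} {f g : ℝ × ℝ → ℂ} {Fv : ℝ × ℝ → ℂ × ℂ}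
    (h : IsTwInv lam (fun p => (f p, g p)) Fv) :
    ∀ p ∈ U, Fv p = (G1 lam f g p, G2 lam f g p) := by
  intro p hp
  have hsq := sq2_pos hp
  set z : ℂ := ⟨p.1, p.2⟩ with hzdef
  have hz : z ≠ 0 := by
    intro h0
    apply hp
    have h1 : z.re = 0 := by rw [h0]; simp
    have h2 : z.im = 0 := by rw [h0]; simp
    exact Prod.ext h1 h2
  set r : ℝ := ‖z‖ with hrdef
  have hr : 0 < r := norm_pos_iff.mpr hz
  have hcos : Real.cos z.arg = p.1 / r := Complex.cos_arg hz
  have hsin : Real.sin z.arg = p.2 / r := Complex.sin_arg z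
  have hr2 : r ^ 2 = sq2 p := by
    rw [hrdef, Complex.sq_norm, Complex.normSq_apply, sq2]
    simp [hzdef]
    ring
  have hp1 : r * Real.cos z.arg = p.1 := by rw [hcos]; field_simp
  have hp2 : r * Real.sin z.arg = p.2 := by rw [hsin]; field_simp
  have key := h r z.arg hr
  rw [hp1, hp2] at key
  have hpt : (-Real.cos z.arg / r, Real.sin z.arg / r) = iv p := by
    rw [hcos, hsin]
    have : r ≠ 0 := hr.ne'
    apply Prod.ext
    · show -(p.1 / r) / r = -p.1 / sq2 p
      rw [← hr2]; ring
    · show p.2 / r / r = p.2 / sq2 p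
      rw [← hr2]; ring
  have hcos2 : Real.cos (2 * z.arg) = (p.1 / r) ^ 2 - (p.2 / r) ^ 2 := by
    rw [Real.cos_two_mul', hcos, hsin]
  have hsin2 : Real.sin (2 * z.arg) = 2 * (p.2 / r) * (p.1 / r) := by
    rw [Real.sin_two_mul, hsin, hcos]
  have hcpow : ((r : ℝ) : ℂ) ^ (-2 * lam) = ((sq2 p : ℝ) : ℂ) ^ (-lam - 1) * ((sq2 p : ℝ) : ℂ) := by
    have h1 : ((r ^ 2 : ℝ) : ℂ) ^ (-lam) = ((r : ℝ) : ℂ) ^ (2 * (-lam)) := cpow_sq hr (-lam)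
    have h2 : (-2 : ℂ) * lam = 2 * (-lam) := by ring
    rw [h2, ← h1, hr2]
    have h3 : ((sq2 p : ℝ) : ℂ) ≠ 0 := by exact_mod_cast hsq.ne'
    have h4 : (-lam : ℂ) = (-lam - 1) + 1 := by ring
    rw [h4, Complex.cpow_add _ _ h3, Complex.cpow_one]
    congr 2
    ring
  rw [key, Prod.smul_def, smul_eq_mul, smul_eq_mul, hpt, hcpow]
  have hrc : ((r : ℝ) : ℂ) ≠ 0 := by exact_mod_cast hr.ne'
  have hsc : ((sq2 p : ℝ) : ℂ) ≠ 0 := by exact_mod_cast hsq.ne'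
  have hr2c : ((r : ℝ) : ℂ) ^ 2 = ((sq2 p : ℝ) : ℂ) := by exact_mod_cast congrArg Complex.ofReal hr2
  apply Prod.ext
  · show _ = G1 lam f g p
    rw [G1]
    simp only [hcos2, hsin2]
    push_cast
    rw [← hr2c]
    field_simp
  · show _ = G2 lam f g p
    rw [G2]
    simp only [hcos2, hsin2]
    push_cast
    rw [← hr2c]
    field_simp

end AuxTw

namespace AuxTw

open Complex

lemma hasDerivAt_ofReal (t₀ : ℝ) : HasDerivAt (fun t : ℝ => ((t : ℝ) : ℂ)) 1 t₀ := by
  simpa using (hasDerivAt_id t₀).ofReal_comp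

lemma H1 (a t₀ : ℝ) : HasDerivAt (fun t : ℝ => a ^ 2 + t ^ 2) (2 * t₀) t₀ := by
  simpa using ((hasDerivAt_pow 2 t₀).const_add (a ^ 2))

lemma H2 {a : ℝ} (ha : a ≠ 0) (t₀ : ℝ) : 0 < a ^ 2 + t₀ ^ 2 := by positivity

lemma hasDerivAt_cpow_real {σ : ℝ → ℝ} {σ' t₀ : ℝ} (h : HasDerivAt σ σ' t₀)
    (hpos : 0 < σ t₀) (w : ℂ) :
    HasDerivAt (fun t => ((σ t : ℝ) : ℂ) ^ w)
      (w * ((σ t₀ : ℝ) : ℂ) ^ (w - 1) * ((σ' : ℝ) : ℂ)) t₀ := by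
  have h0 : ((σ t₀ : ℝ) : ℂ) ∈ Complex.slitPlane := by
    rw [Complex.mem_slitPlane_iff]
    left
    rw [Complex.ofReal_re]
    exact hpos
  have hz : HasDerivAt (fun y : ℝ => ((y : ℝ) : ℂ) ^ w)
      (w * ((σ t₀ : ℝ) : ℂ) ^ (w - 1)) (σ t₀) :=
    (Complex.hasStrictDerivAt_cpow_const h0).hasDerivAt.comp_ofReal
  have hc := hz.scomp t₀ h
  refine hc.congr_deriv (Eq.symm ?_)
  rw [Complex.real_smul]
  ring

lemma cpow_succ {s : ℝ} (hs : s ≠ 0) (w : ℂ) :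
    ((s : ℝ) : ℂ) ^ w = ((s : ℝ) : ℂ) ^ (w - 1) * ((s : ℝ) : ℂ) := by
  have hz : ((s : ℝ) : ℂ) ≠ 0 := by exact_mod_cast hs
  conv_lhs => rw [show w = (w - 1) + 1 by ring]
  rw [Complex.cpow_add _ _ hz, Complex.cpow_one]

lemma Hcpow {a : ℝ} (ha : a ≠ 0) (t₀ : ℝ) (w : ℂ) :
    HasDerivAt (fun t : ℝ => ((a ^ 2 + t ^ 2 : ℝ) : ℂ) ^ w)
      (w * ((a ^ 2 + t₀ ^ 2 : ℝ) : ℂ) ^ (w - 1) * ((2 * t₀ : ℝ) : ℂ)) t₀ := by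
  have h0 : ((a ^ 2 + t₀ ^ 2 : ℝ) : ℂ) ∈ Complex.slitPlane := by
    rw [Complex.mem_slitPlane_iff]
    left
    rw [Complex.ofReal_re]
    exact H2 ha t₀
  have hz : HasDerivAt (fun y : ℝ => ((y : ℝ) : ℂ) ^ w)
      (w * ((a ^ 2 + t₀ ^ 2 : ℝ) : ℂ) ^ (w - 1)) (a ^ 2 + t₀ ^ 2) :=
    (Complex.hasStrictDerivAt_cpow_const h0).hasDerivAt.comp_ofReal
  have h := hz.scomp t₀ (H1 a t₀)
  refine h.congr_deriv (Eq.symm ?_)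
  rw [Complex.real_smul]
  push_cast
  ring

lemma HX {a : ℝ} (ha : a ≠ 0) (t₀ : ℝ) :
    HasDerivAt (fun t : ℝ => -a / (a ^ 2 + t ^ 2))
      (2 * a * t₀ / (a ^ 2 + t₀ ^ 2) ^ 2) t₀ := by
  have h := (hasDerivAt_const t₀ (-a)).div (H1 a t₀) (H2 ha t₀).ne'
  refine h.congr_deriv (Eq.symm ?_)
  field_simp
  ring

lemma HY {a : ℝ} (ha : a ≠ 0) (t₀ : ℝ) :
    HasDerivAt (fun t : ℝ => t / (a ^ 2 + t ^ 2))
      ((a ^ 2 - t₀ ^ 2) / (a ^ 2 + t₀ ^ 2) ^ 2) t₀ := by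
  have h := (hasDerivAt_id t₀).div (H1 a t₀) (H2 ha t₀).ne'
  refine h.congr_deriv (Eq.symm ?_)
  simp only [id]
  field_simp
  ring

/-- Composition of a 2-variable function with the inversion curve `t ↦ ι(a,t)`. -/
lemma Hcomp {a : ℝ} (ha : a ≠ 0) (t₀ : ℝ) (F : ℝ × ℝ → ℂ)
    (hF : DifferentiableAt ℝ F (-a / (a ^ 2 + t₀ ^ 2), t₀ / (a ^ 2 + t₀ ^ 2))) :
    HasDerivAt (fun t => F (-a / (a ^ 2 + t ^ 2), t / (a ^ 2 + t ^ 2)))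
      (((2 * a * t₀ / (a ^ 2 + t₀ ^ 2) ^ 2 : ℝ) : ℂ) *
          pdx F (-a / (a ^ 2 + t₀ ^ 2), t₀ / (a ^ 2 + t₀ ^ 2)) +
        (((a ^ 2 - t₀ ^ 2) / (a ^ 2 + t₀ ^ 2) ^ 2 : ℝ) : ℂ) *
          pdy F (-a / (a ^ 2 + t₀ ^ 2), t₀ / (a ^ 2 + t₀ ^ 2))) t₀ :=
  hasDerivAt_comp2 F (HX ha t₀) (HY ha t₀) hF

lemma mem_U_of_ne {a b : ℝ} (ha : a ≠ 0) : ((a, b) : ℝ × ℝ) ∈ U := by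
  intro hc
  exact ha (congrArg Prod.fst hc)

lemma mem_U_of_ne' {a b : ℝ} (hb : b ≠ 0) : ((a, b) : ℝ × ℝ) ∈ U := by
  intro hc
  exact hb (congrArg Prod.snd hc)

lemma iv_pt {a t₀ : ℝ} (ha : a ≠ 0) :
    iv (a, t₀) = (-a / (a ^ 2 + t₀ ^ 2), t₀ / (a ^ 2 + t₀ ^ 2)) := by
  simp [iv, sq2]

section Main

variable {lam : ℂ} {f g : ℝ × ℝ → ℂ}
  (hf : ContDiffOn ℝ (⊤ : ℕ∞) f U) (hg : ContDiffOn ℝ (⊤ : ℕ∞) g U)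

include hf hg

/-- `∂_y G1` along the `x`-axis. -/
lemma A1 {a : ℝ} (ha : a ≠ 0) :
    pdy (G1 lam f g) (a, 0) =
      ((a ^ 2 : ℝ) : ℂ) ^ (-lam - 1) * (pdy f (-1 / a, 0) - 2 * (a : ℂ) * g (-1 / a, 0)) := by
  have haU : ((a, (0:ℝ)) : ℝ × ℝ) ∈ U := mem_U_of_ne ha
  have hz : a ^ 2 + (0:ℝ) ^ 2 = a ^ 2 := by norm_num
  have hac : (a : ℂ) ≠ 0 := by exact_mod_cast ha
  have hP : ((-a / (a ^ 2 + (0:ℝ) ^ 2), (0:ℝ) / (a ^ 2 + (0:ℝ) ^ 2)) : ℝ × ℝ) = (-1 / a, 0) := by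
    apply Prod.ext
    · show -a / (a ^ 2 + (0:ℝ) ^ 2) = -1 / a
      rw [hz]
      field_simp
    · show (0:ℝ) / (a ^ 2 + (0:ℝ) ^ 2) = 0
      simp
  have hPU : ((-1 / a, (0:ℝ)) : ℝ × ℝ) ∈ U := mem_U_of_ne (by simpa using inv_ne_zero ha)
  have hfd : DifferentiableAt ℝ f (-1 / a, 0) := diffAt hf hPU
  have hgd : DifferentiableAt ℝ g (-1 / a, 0) := diffAt hg hPU
  apply pdy_eq (diffAt (contDiffOn_G1 hf hg) haU)
  have hfun : (fun t => G1 lam f g (a, t)) =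
      fun t => ((a ^ 2 + t ^ 2 : ℝ) : ℂ) ^ (-lam - 1) *
        (((a : ℂ) ^ 2 - (t : ℂ) ^ 2) * f (-a / (a ^ 2 + t ^ 2), t / (a ^ 2 + t ^ 2)) -
          2 * (a : ℂ) * (t : ℂ) * g (-a / (a ^ 2 + t ^ 2), t / (a ^ 2 + t ^ 2))) := by
    funext t
    simp [G1, iv, sq2]
  rw [hfun]
  have hu : HasDerivAt (fun t => f (-a / (a ^ 2 + t ^ 2), t / (a ^ 2 + t ^ 2)))
      (((1 / a ^ 2 : ℝ) : ℂ) * pdy f (-1 / a, 0)) 0 := by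
    have h := Hcomp ha 0 f (by rw [hP]; exact hfd)
    rw [hP] at h
    convert h using 1
    push_cast
    field_simp
    ring
  have hv : HasDerivAt (fun t => g (-a / (a ^ 2 + t ^ 2), t / (a ^ 2 + t ^ 2)))
      (((1 / a ^ 2 : ℝ) : ℂ) * pdy g (-1 / a, 0)) 0 := by
    have h := Hcomp ha 0 g (by rw [hP]; exact hgd)
    rw [hP] at h
    convert h using 1
    push_cast
    field_simp
    ring
  have hS : HasDerivAt (fun t : ℝ => ((a ^ 2 + t ^ 2 : ℝ) : ℂ) ^ (-lam - 1)) 0 0 := by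
    have h := Hcpow ha 0 (-lam - 1)
    convert h using 1
    norm_num
  have hq : HasDerivAt (fun t : ℝ => ((a : ℂ) ^ 2 - (t : ℂ) ^ 2)) 0 0 := by
    have h0 : (fun t : ℝ => ((a : ℂ) ^ 2 - (t : ℂ) ^ 2)) =
        fun t : ℝ => ((a ^ 2 - t ^ 2 : ℝ) : ℂ) := by
      funext t; push_cast; ring
    rw [h0]
    have h := ((hasDerivAt_pow 2 (0:ℝ)).const_sub (a ^ 2)).ofReal_comp
    convert h using 1
    norm_num
  have hr : HasDerivAt (fun t : ℝ => 2 * (a : ℂ) * (t : ℂ)) (2 * (a : ℂ)) 0 := by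
    have h := (hasDerivAt_ofReal 0).const_mul (2 * (a : ℂ))
    refine h.congr_deriv (Eq.symm ?_)
    ring
  have hbig := hS.mul ((hq.mul hu).sub (hr.mul hv))
  refine hbig.congr_deriv (Eq.symm ?_)
  simp only [Pi.mul_apply, Pi.add_apply, Pi.sub_apply]
  rw [hP, hz]
  push_cast
  field_simp
  ring


/-- `∂_x G2` along the `x`-axis. -/
lemma A2 {a : ℝ} (ha : a ≠ 0) :
    pdx (G2 lam f g) (a, 0) =
      ((a ^ 2 : ℝ) : ℂ) ^ (-lam - 1) *
        (-2 * lam * (a : ℂ) * g (-1 / a, 0) + pdx g (-1 / a, 0)) := by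
  have haU : ((a, (0:ℝ)) : ℝ × ℝ) ∈ U := mem_U_of_ne ha
  have hac : (a : ℂ) ≠ 0 := by exact_mod_cast ha
  have hPU : ((-1 / a, (0:ℝ)) : ℝ × ℝ) ∈ U := mem_U_of_ne (by simpa using inv_ne_zero ha)
  have hgd : DifferentiableAt ℝ g (-1 / a, 0) := diffAt hg hPU
  apply pdx_eq (diffAt (contDiffOn_G2 hf hg) haU)
  -- the slice agrees with a clean function near `a`
  have hev : (fun t => ((t ^ 2 : ℝ) : ℂ) ^ (-lam - 1) * ((t : ℂ) ^ 2 * g (-1 / t, 0)))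
      =ᶠ[nhds a] (fun t => G2 lam f g (t, 0)) := by
    filter_upwards [isOpen_ne.mem_nhds ha] with t ht
    have hts : sq2 ((t, (0:ℝ)) : ℝ × ℝ) = t ^ 2 := by simp [sq2]
    have hiv : iv ((t, (0:ℝ)) : ℝ × ℝ) = (-1 / t, 0) := by
      simp only [iv, hts]
      apply Prod.ext
      · show -t / t ^ 2 = -1 / t
        field_simp
      · show (0:ℝ) / t ^ 2 = 0
        simp
    simp only [G2, hts, hiv]
    push_cast
    ring
  apply HasDerivAt.congr_of_eventuallyEq _ hev.symm
  -- derivative of the clean function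
  have hcp : HasDerivAt (fun t : ℝ => ((t ^ 2 : ℝ) : ℂ) ^ (-lam - 1))
      ((-lam - 1) * ((a ^ 2 : ℝ) : ℂ) ^ (-lam - 1 - 1) * ((2 * a : ℝ) : ℂ)) a := by
    have h := hasDerivAt_cpow_real (by simpa using hasDerivAt_pow 2 a) (by positivity) (-lam - 1)
    convert h using 2
  have ht2 : HasDerivAt (fun t : ℝ => (t : ℂ) ^ 2) (2 * (a : ℂ)) a := by
    have h0 : (fun t : ℝ => (t : ℂ) ^ 2) = fun t : ℝ => ((t ^ 2 : ℝ) : ℂ) := by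
      funext t; push_cast; ring
    rw [h0]
    have h := (hasDerivAt_pow 2 a).ofReal_comp
    convert h using 1
    push_cast
    ring
  have hgc : HasDerivAt (fun t : ℝ => g (-1 / t, 0))
      (((1 / a ^ 2 : ℝ) : ℂ) * pdx g (-1 / a, 0)) a := by
    have h1 : HasDerivAt (fun t : ℝ => -1 / t) (1 / a ^ 2) a := by
      have h0 : (fun t : ℝ => -1 / t) = fun t : ℝ => -t⁻¹ := by
        funext t
        field_simp
      rw [h0]
      have h := (hasDerivAt_inv ha).neg
      refine h.congr_deriv (Eq.symm ?_)
      field_simp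
    have h := hasDerivAt_comp2 g h1 (hasDerivAt_const a (0:ℝ)) hgd
    convert h using 1
    push_cast
    ring
  have hbig := hcp.mul (ht2.mul hgc)
  refine hbig.congr_deriv (Eq.symm ?_)
  simp only [Pi.mul_apply, Pi.add_apply, Pi.sub_apply]
  rw [cpow_succ (show (a:ℝ)^2 ≠ 0 by positivity) (-lam - 1)]
  push_cast
  field_simp
  ring


end Main

/-- The derivative `∂_y G2 (x, b)` as an explicit function of `b`. -/
def chi (lam : ℂ) (f g : ℝ × ℝ → ℂ) (x b : ℝ) : ℂ :=
  ((-lam - 1) * ((x ^ 2 + b ^ 2 : ℝ) : ℂ) ^ (-lam - 1 - 1) * ((2 * b : ℝ) : ℂ)) *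
      (2 * (x : ℂ) * (b : ℂ) * f (-x / (x ^ 2 + b ^ 2), b / (x ^ 2 + b ^ 2)) +
        ((x : ℂ) ^ 2 - (b : ℂ) ^ 2) * g (-x / (x ^ 2 + b ^ 2), b / (x ^ 2 + b ^ 2))) +
    ((x ^ 2 + b ^ 2 : ℝ) : ℂ) ^ (-lam - 1) *
      ((2 * (x : ℂ)) * f (-x / (x ^ 2 + b ^ 2), b / (x ^ 2 + b ^ 2)) +
        (2 * (x : ℂ) * (b : ℂ)) *
          (((2 * x * b / (x ^ 2 + b ^ 2) ^ 2 : ℝ) : ℂ) *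
              pdx f (-x / (x ^ 2 + b ^ 2), b / (x ^ 2 + b ^ 2)) +
            (((x ^ 2 - b ^ 2) / (x ^ 2 + b ^ 2) ^ 2 : ℝ) : ℂ) *
              pdy f (-x / (x ^ 2 + b ^ 2), b / (x ^ 2 + b ^ 2))) +
        ((-(2 * (b : ℂ))) * g (-x / (x ^ 2 + b ^ 2), b / (x ^ 2 + b ^ 2)) +
          ((x : ℂ) ^ 2 - (b : ℂ) ^ 2) *
            (((2 * x * b / (x ^ 2 + b ^ 2) ^ 2 : ℝ) : ℂ) *
                pdx g (-x / (x ^ 2 + b ^ 2), b / (x ^ 2 + b ^ 2)) +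
              (((x ^ 2 - b ^ 2) / (x ^ 2 + b ^ 2) ^ 2 : ℝ) : ℂ) *
                pdy g (-x / (x ^ 2 + b ^ 2), b / (x ^ 2 + b ^ 2)))))

section Main2

variable {lam : ℂ} {f g : ℝ × ℝ → ℂ}
  (hf : ContDiffOn ℝ (⊤ : ℕ∞) f U) (hg : ContDiffOn ℝ (⊤ : ℕ∞) g U)

include hf hg

/-- `∂_y G2` along vertical slices. -/
lemma A3 {x : ℝ} (hx : x ≠ 0) (b : ℝ) :
    pdy (G2 lam f g) (x, b) = chi lam f g x b := by
  have hxU : ((x, b) : ℝ × ℝ) ∈ U := mem_U_of_ne hx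
  have hPU : ((-x / (x ^ 2 + b ^ 2), b / (x ^ 2 + b ^ 2)) : ℝ × ℝ) ∈ U := by
    rw [← iv_pt hx]
    exact iv_mem hxU
  have hfd : DifferentiableAt ℝ f _ := diffAt hf hPU
  have hgd : DifferentiableAt ℝ g _ := diffAt hg hPU
  apply pdy_eq (diffAt (contDiffOn_G2 hf hg) hxU)
  have hfun : (fun t => G2 lam f g (x, t)) =
      fun t => ((x ^ 2 + t ^ 2 : ℝ) : ℂ) ^ (-lam - 1) *
        (2 * (x : ℂ) * (t : ℂ) * f (-x / (x ^ 2 + t ^ 2), t / (x ^ 2 + t ^ 2)) +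
          ((x : ℂ) ^ 2 - (t : ℂ) ^ 2) * g (-x / (x ^ 2 + t ^ 2), t / (x ^ 2 + t ^ 2))) := by
    funext t
    simp [G2, iv, sq2]
  rw [hfun]
  have hS := Hcpow hx b (-lam - 1)
  have hlin : HasDerivAt (fun t : ℝ => 2 * (x : ℂ) * (t : ℂ)) (2 * (x : ℂ)) b := by
    have h := (hasDerivAt_ofReal b).const_mul (2 * (x : ℂ))
    refine h.congr_deriv (Eq.symm ?_)
    ring
  have hq : HasDerivAt (fun t : ℝ => ((x : ℂ) ^ 2 - (t : ℂ) ^ 2)) (-(2 * (b : ℂ))) b := by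
    have h0 : (fun t : ℝ => ((x : ℂ) ^ 2 - (t : ℂ) ^ 2)) =
        fun t : ℝ => ((x ^ 2 - t ^ 2 : ℝ) : ℂ) := by
      funext t; push_cast; ring
    rw [h0]
    have h := ((hasDerivAt_pow 2 b).const_sub (x ^ 2)).ofReal_comp
    convert h using 1
    push_cast
    ring
  have hu := Hcomp hx b f hfd
  have hv := Hcomp hx b g hgd
  have hbig := hS.mul ((hlin.mul hu).add (hq.mul hv))
  exact hbig


set_option maxHeartbeats 2000000 in
/-- Derivative of `chi` at `0`. -/
lemma B3 {x : ℝ} (hx : x ≠ 0) :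
    HasDerivAt (chi lam f g x)
      (((x ^ 2 : ℝ) : ℂ) ^ (-lam - 1 - 1) *
        (pdy (pdy g) (-1 / x, 0) + 4 * (x : ℂ) * pdy f (-1 / x, 0)
          + 2 * (x : ℂ) * pdx g (-1 / x, 0)
          - 2 * (lam + 2) * (x : ℂ) ^ 2 * g (-1 / x, 0))) 0 := by
  have hz : x ^ 2 + (0:ℝ) ^ 2 = x ^ 2 := by norm_num
  have hxc : (x : ℂ) ≠ 0 := by exact_mod_cast hx
  have hP : ((-x / (x ^ 2 + (0:ℝ) ^ 2), (0:ℝ) / (x ^ 2 + (0:ℝ) ^ 2)) : ℝ × ℝ) = (-1 / x, 0) := by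
    apply Prod.ext
    · show -x / (x ^ 2 + (0:ℝ) ^ 2) = -1 / x
      rw [hz]
      field_simp
    · show (0:ℝ) / (x ^ 2 + (0:ℝ) ^ 2) = 0
      simp
  have hPU : ((-1 / x, (0:ℝ)) : ℝ × ℝ) ∈ U := mem_U_of_ne (by simpa using inv_ne_zero hx)
  have key : ∀ F : ℝ × ℝ → ℂ, DifferentiableAt ℝ F (-1 / x, 0) →
      HasDerivAt (fun b => F (-x / (x ^ 2 + b ^ 2), b / (x ^ 2 + b ^ 2)))
        (((1 / x ^ 2 : ℝ) : ℂ) * pdy F (-1 / x, 0)) 0 := by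
    intro F hFd
    have h := Hcomp hx 0 F (by rw [hP]; exact hFd)
    rw [hP] at h
    convert h using 1
    push_cast
    field_simp
    try ring
  have hu := key f (diffAt hf hPU)
  have hv := key g (diffAt hg hPU)
  have hfx := key (pdx f) (diffAt (pdx_contDiffOn hf) hPU)
  have hfy := key (pdy f) (diffAt (pdy_contDiffOn hf) hPU)
  have hgx := key (pdx g) (diffAt (pdx_contDiffOn hg) hPU)
  have hgy := key (pdy g) (diffAt (pdy_contDiffOn hg) hPU)
  have hS1 : HasDerivAt (fun b : ℝ => ((x ^ 2 + b ^ 2 : ℝ) : ℂ) ^ (-lam - 1)) 0 0 := by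
    have h := Hcpow hx 0 (-lam - 1)
    convert h using 1
    norm_num
  have hS2 : HasDerivAt (fun b : ℝ => ((x ^ 2 + b ^ 2 : ℝ) : ℂ) ^ (-lam - 1 - 1)) 0 0 := by
    have h := Hcpow hx 0 (-lam - 1 - 1)
    convert h using 1
    norm_num
  have hL : HasDerivAt (fun b : ℝ => ((2 * b : ℝ) : ℂ)) 2 0 := by
    have h0 : HasDerivAt (fun b : ℝ => 2 * b) 2 0 := by
      simpa using (hasDerivAt_id (0:ℝ)).const_mul (2:ℝ)
    have h := h0.ofReal_comp
    convert h using 1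
    try norm_num
  have hlin2 : HasDerivAt (fun b : ℝ => 2 * (x : ℂ) * (b : ℂ)) (2 * (x : ℂ)) 0 := by
    have h := (hasDerivAt_ofReal 0).const_mul (2 * (x : ℂ))
    refine h.congr_deriv (Eq.symm ?_)
    ring
  have hq2 : HasDerivAt (fun b : ℝ => ((x : ℂ) ^ 2 - (b : ℂ) ^ 2)) 0 0 := by
    have h0 : (fun b : ℝ => ((x : ℂ) ^ 2 - (b : ℂ) ^ 2)) =
        fun b : ℝ => ((x ^ 2 - b ^ 2 : ℝ) : ℂ) := by
      funext t; push_cast; ring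
    rw [h0]
    have h := ((hasDerivAt_pow 2 (0:ℝ)).const_sub (x ^ 2)).ofReal_comp
    convert h using 1
    norm_num
  have hneg2b : HasDerivAt (fun b : ℝ => -(2 * (b : ℂ))) (-2) 0 := by
    have h := ((hasDerivAt_ofReal 0).const_mul (2 : ℂ)).neg
    refine h.congr_deriv (Eq.symm ?_)
    ring
  have hc1r : HasDerivAt (fun b : ℝ => 2 * x * b / (x ^ 2 + b ^ 2) ^ 2) (2 * x / (x ^ 2) ^ 2) 0 := by
    have hn : HasDerivAt (fun b : ℝ => 2 * x * b) (2 * x) 0 := by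
      simpa using (hasDerivAt_id (0:ℝ)).const_mul (2 * x)
    have hd : HasDerivAt (fun b : ℝ => (x ^ 2 + b ^ 2) ^ 2) 0 0 := by
      have h := (H1 x 0).pow 2
      refine h.congr_deriv (Eq.symm ?_)
      norm_num
    have h := hn.div hd (by positivity)
    refine h.congr_deriv (Eq.symm ?_)
    rw [hz]
    field_simp
    ring
  have hc1 : HasDerivAt (fun b : ℝ => ((2 * x * b / (x ^ 2 + b ^ 2) ^ 2 : ℝ) : ℂ))
      (((2 * x / (x ^ 2) ^ 2 : ℝ) : ℂ)) 0 := hc1r.ofReal_comp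
  have hc2r : HasDerivAt (fun b : ℝ => (x ^ 2 - b ^ 2) / (x ^ 2 + b ^ 2) ^ 2) 0 0 := by
    have hn : HasDerivAt (fun b : ℝ => x ^ 2 - b ^ 2) 0 0 := by
      have h := (hasDerivAt_pow 2 (0:ℝ)).const_sub (x ^ 2)
      refine h.congr_deriv (Eq.symm ?_)
      norm_num
    have hd : HasDerivAt (fun b : ℝ => (x ^ 2 + b ^ 2) ^ 2) 0 0 := by
      have h := (H1 x 0).pow 2
      refine h.congr_deriv (Eq.symm ?_)
      norm_num
    have h := hn.div hd (by positivity)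
    refine h.congr_deriv (Eq.symm ?_)
    norm_num
  have hc2 : HasDerivAt (fun b : ℝ => (((x ^ 2 - b ^ 2) / (x ^ 2 + b ^ 2) ^ 2 : ℝ) : ℂ)) 0 0 :=
    by simpa using hc2r.ofReal_comp
  have hW := (hlin2.mul hu).add (hq2.mul hv)
  have hTA := ((hasDerivAt_const (0:ℝ) (-lam - 1)).mul hS2).mul hL
  have hZ := (((hasDerivAt_const (0:ℝ) (2 * (x : ℂ))).mul hu).add
      (hlin2.mul ((hc1.mul hfx).add (hc2.mul hfy)))).add
        ((hneg2b.mul hv).add (hq2.mul ((hc1.mul hgx).add (hc2.mul hgy))))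
  have hbig := (hTA.mul hW).add (hS1.mul hZ)
  have hfun : chi lam f g x = (fun b =>
      ((-lam - 1) * ((x ^ 2 + b ^ 2 : ℝ) : ℂ) ^ (-lam - 1 - 1) * ((2 * b : ℝ) : ℂ)) *
        (2 * (x : ℂ) * (b : ℂ) * f (-x / (x ^ 2 + b ^ 2), b / (x ^ 2 + b ^ 2)) +
          ((x : ℂ) ^ 2 - (b : ℂ) ^ 2) * g (-x / (x ^ 2 + b ^ 2), b / (x ^ 2 + b ^ 2))) +
      ((x ^ 2 + b ^ 2 : ℝ) : ℂ) ^ (-lam - 1) *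
        ((2 * (x : ℂ)) * f (-x / (x ^ 2 + b ^ 2), b / (x ^ 2 + b ^ 2)) +
          (2 * (x : ℂ) * (b : ℂ)) *
            (((2 * x * b / (x ^ 2 + b ^ 2) ^ 2 : ℝ) : ℂ) *
                pdx f (-x / (x ^ 2 + b ^ 2), b / (x ^ 2 + b ^ 2)) +
              (((x ^ 2 - b ^ 2) / (x ^ 2 + b ^ 2) ^ 2 : ℝ) : ℂ) *
                pdy f (-x / (x ^ 2 + b ^ 2), b / (x ^ 2 + b ^ 2))) +
          ((-(2 * (b : ℂ))) * g (-x / (x ^ 2 + b ^ 2), b / (x ^ 2 + b ^ 2)) +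
            ((x : ℂ) ^ 2 - (b : ℂ) ^ 2) *
              (((2 * x * b / (x ^ 2 + b ^ 2) ^ 2 : ℝ) : ℂ) *
                  pdx g (-x / (x ^ 2 + b ^ 2), b / (x ^ 2 + b ^ 2)) +
                (((x ^ 2 - b ^ 2) / (x ^ 2 + b ^ 2) ^ 2 : ℝ) : ℂ) *
                  pdy g (-x / (x ^ 2 + b ^ 2), b / (x ^ 2 + b ^ 2)))))) := rfl
  rw [hfun]
  refine hbig.congr_deriv (Eq.symm ?_)
  simp only [Pi.mul_apply, Pi.add_apply, Pi.sub_apply]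
  rw [hP, hz, cpow_succ (show (x:ℝ)^2 ≠ 0 by positivity) (-lam - 1)]
  push_cast
  field_simp [hxc]
  ring


/-- Derivative of the `pdy G1` axis formula at `x`. -/
lemma B1 {x : ℝ} (hx : x ≠ 0) :
    HasDerivAt (fun a : ℝ => ((a ^ 2 : ℝ) : ℂ) ^ (-lam - 1) *
        (pdy f (-1 / a, 0) - 2 * (a : ℂ) * g (-1 / a, 0)))
      (((x ^ 2 : ℝ) : ℂ) ^ (-lam - 1 - 1) *
        (pdx (pdy f) (-1 / x, 0) - 2 * (lam + 1) * (x : ℂ) * pdy f (-1 / x, 0)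
          - 2 * (x : ℂ) * pdx g (-1 / x, 0)
          + 2 * (2 * lam + 1) * (x : ℂ) ^ 2 * g (-1 / x, 0))) x := by
  have hxc : (x : ℂ) ≠ 0 := by exact_mod_cast hx
  have hPU : ((-1 / x, (0:ℝ)) : ℝ × ℝ) ∈ U := mem_U_of_ne (by simpa using inv_ne_zero hx)
  have h1 : HasDerivAt (fun t : ℝ => -1 / t) (1 / x ^ 2) x := by
    have h0 : (fun t : ℝ => -1 / t) = fun t : ℝ => -t⁻¹ := by
      funext t
      field_simp
    rw [h0]
    have h := (hasDerivAt_inv hx).neg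
    refine h.congr_deriv (Eq.symm ?_)
    field_simp
  have key2 : ∀ F : ℝ × ℝ → ℂ, DifferentiableAt ℝ F (-1 / x, 0) →
      HasDerivAt (fun a => F (-1 / a, 0)) (((1 / x ^ 2 : ℝ) : ℂ) * pdx F (-1 / x, 0)) x := by
    intro F hFd
    have h := hasDerivAt_comp2 F h1 (hasDerivAt_const x (0:ℝ)) hFd
    convert h using 1
    push_cast
    ring
  have hfy := key2 (pdy f) (diffAt (pdy_contDiffOn hf) hPU)
  have hgc := key2 g (diffAt hg hPU)
  have hcp : HasDerivAt (fun a : ℝ => ((a ^ 2 : ℝ) : ℂ) ^ (-lam - 1))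
      ((-lam - 1) * ((x ^ 2 : ℝ) : ℂ) ^ (-lam - 1 - 1) * ((2 * x : ℝ) : ℂ)) x := by
    have h := hasDerivAt_cpow_real (by simpa using hasDerivAt_pow 2 x) (by positivity) (-lam - 1)
    convert h using 2
  have h2a : HasDerivAt (fun a : ℝ => 2 * (a : ℂ)) 2 x := by
    have h := (hasDerivAt_ofReal x).const_mul (2 : ℂ)
    refine h.congr_deriv (Eq.symm ?_)
    ring
  have hbig := hcp.mul (hfy.sub (h2a.mul hgc))
  refine hbig.congr_deriv (Eq.symm ?_)
  simp only [Pi.mul_apply, Pi.add_apply, Pi.sub_apply]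
  rw [cpow_succ (show (x:ℝ)^2 ≠ 0 by positivity) (-lam - 1)]
  push_cast
  field_simp [hxc]
  ring

/-- Derivative of the `pdx G2` axis formula at `x`. -/
lemma B2 {x : ℝ} (hx : x ≠ 0) :
    HasDerivAt (fun a : ℝ => ((a ^ 2 : ℝ) : ℂ) ^ (-lam - 1) *
        (-2 * lam * (a : ℂ) * g (-1 / a, 0) + pdx g (-1 / a, 0)))
      (((x ^ 2 : ℝ) : ℂ) ^ (-lam - 1 - 1) *
        (pdx (pdx g) (-1 / x, 0) - 2 * (2 * lam + 1) * (x : ℂ) * pdx g (-1 / x, 0)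
          + 2 * lam * (2 * lam + 1) * (x : ℂ) ^ 2 * g (-1 / x, 0))) x := by
  have hxc : (x : ℂ) ≠ 0 := by exact_mod_cast hx
  have hPU : ((-1 / x, (0:ℝ)) : ℝ × ℝ) ∈ U := mem_U_of_ne (by simpa using inv_ne_zero hx)
  have h1 : HasDerivAt (fun t : ℝ => -1 / t) (1 / x ^ 2) x := by
    have h0 : (fun t : ℝ => -1 / t) = fun t : ℝ => -t⁻¹ := by
      funext t
      field_simp
    rw [h0]
    have h := (hasDerivAt_inv hx).neg
    refine h.congr_deriv (Eq.symm ?_)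
    field_simp
  have key2 : ∀ F : ℝ × ℝ → ℂ, DifferentiableAt ℝ F (-1 / x, 0) →
      HasDerivAt (fun a => F (-1 / a, 0)) (((1 / x ^ 2 : ℝ) : ℂ) * pdx F (-1 / x, 0)) x := by
    intro F hFd
    have h := hasDerivAt_comp2 F h1 (hasDerivAt_const x (0:ℝ)) hFd
    convert h using 1
    push_cast
    ring
  have hgx := key2 (pdx g) (diffAt (pdx_contDiffOn hg) hPU)
  have hgc := key2 g (diffAt hg hPU)
  have hcp : HasDerivAt (fun a : ℝ => ((a ^ 2 : ℝ) : ℂ) ^ (-lam - 1))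
      ((-lam - 1) * ((x ^ 2 : ℝ) : ℂ) ^ (-lam - 1 - 1) * ((2 * x : ℝ) : ℂ)) x := by
    have h := hasDerivAt_cpow_real (by simpa using hasDerivAt_pow 2 x) (by positivity) (-lam - 1)
    convert h using 2
  have h2la : HasDerivAt (fun a : ℝ => -2 * lam * (a : ℂ)) (-2 * lam) x := by
    have h := (hasDerivAt_ofReal x).const_mul (-2 * lam)
    refine h.congr_deriv (Eq.symm ?_)
    ring
  have hbig := hcp.mul ((h2la.mul hgc).add hgx)
  refine hbig.congr_deriv (Eq.symm ?_)
  simp only [Pi.mul_apply, Pi.add_apply, Pi.sub_apply]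
  rw [cpow_succ (show (x:ℝ)^2 ≠ 0 by positivity) (-lam - 1)]
  push_cast
  field_simp [hxc]
  ring


end Main2


end AuxTw


open AuxTw

/-- For `ν = λ + 2`, the operator
`D(f,g)(x) = 2(2λ+1)(∂²f/∂x∂y)(x,0) + (λ−1)(∂²g/∂x²)(x,0) + (λ+1)(2λ+1)(∂²g/∂y²)(x,0)`
satisfies `(D F^∨_λ)(x) = |x|^{-2ν} (D F)(-1/x)`. -/
theorem functional_identity_nu_eq_lam_add_two (lam : ℂ) (f g : ℝ × ℝ → ℂ)
    (hf : ContDiffOn ℝ (⊤ : ℕ∞) f {p : ℝ × ℝ | p ≠ (0, 0)})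
    (hg : ContDiffOn ℝ (⊤ : ℕ∞) g {p : ℝ × ℝ | p ≠ (0, 0)})
    (Fv : ℝ × ℝ → ℂ × ℂ) (h : IsTwInv lam (fun p => (f p, g p)) Fv) :
    ∀ x : ℝ, x ≠ 0 →
      2 * (2 * lam + 1) * pdx (pdy fun p => (Fv p).1) (x, 0)
          + (lam - 1) * pdx (pdx fun p => (Fv p).2) (x, 0)
          + (lam + 1) * (2 * lam + 1) * pdy (pdy fun p => (Fv p).2) (x, 0)
        = ((|x| : ℝ) : ℂ) ^ (-2 * (lam + 2)) *
            (2 * (2 * lam + 1) * pdx (pdy f) (-1 / x, 0)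
              + (lam - 1) * pdx (pdx g) (-1 / x, 0)
              + (lam + 1) * (2 * lam + 1) * pdy (pdy g) (-1 / x, 0)) := by
  intro x hx
  have hf' : ContDiffOn ℝ (⊤ : ℕ∞) f U := hf
  have hg' : ContDiffOn ℝ (⊤ : ℕ∞) g U := hg
  have hxc : (x : ℂ) ≠ 0 := by exact_mod_cast hx
  have hxU : ((x, (0:ℝ)) : ℝ × ℝ) ∈ U := mem_U_of_ne hx
  have hG1 := contDiffOn_G1 (lam := lam) hf' hg'
  have hG2 := contDiffOn_G2 (lam := lam) hf' hg'
  have hFv1 : ∀ p ∈ U, (Fv p).1 = G1 lam f g p := fun p hp => by rw [Fv_eq h p hp]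
  have hFv2 : ∀ p ∈ U, (Fv p).2 = G2 lam f g p := fun p hp => by rw [Fv_eq h p hp]
  -- replace Fv by G1/G2 in the second derivatives
  have hpd1 : ∀ p ∈ U, pdy (fun q => (Fv q).1) p = pdy (G1 lam f g) p := by
    intro p hp
    have hev : (fun q => (Fv q).1) =ᶠ[nhds p] G1 lam f g := by
      filter_upwards [isOpen_U.mem_nhds hp] with q hq
      exact hFv1 q hq
    simp only [pdy]
    rw [hev.fderiv_eq]
  have hpd2 : ∀ p ∈ U, pdx (fun q => (Fv q).2) p = pdx (G2 lam f g) p := by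
    intro p hp
    have hev : (fun q => (Fv q).2) =ᶠ[nhds p] G2 lam f g := by
      filter_upwards [isOpen_U.mem_nhds hp] with q hq
      exact hFv2 q hq
    simp only [pdx]
    rw [hev.fderiv_eq]
  have hpd3 : ∀ p ∈ U, pdy (fun q => (Fv q).2) p = pdy (G2 lam f g) p := by
    intro p hp
    have hev : (fun q => (Fv q).2) =ᶠ[nhds p] G2 lam f g := by
      filter_upwards [isOpen_U.mem_nhds hp] with q hq
      exact hFv2 q hq
    simp only [pdy]
    rw [hev.fderiv_eq]
  have e1 : pdx (pdy fun p => (Fv p).1) (x, 0) = pdx (pdy (G1 lam f g)) (x, 0) := by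
    have hev : (pdy fun q => (Fv q).1) =ᶠ[nhds ((x, (0:ℝ)) : ℝ × ℝ)] pdy (G1 lam f g) := by
      filter_upwards [isOpen_U.mem_nhds hxU] with q hq
      exact hpd1 q hq
    simp only [pdx]
    rw [hev.fderiv_eq]
  have e2 : pdx (pdx fun p => (Fv p).2) (x, 0) = pdx (pdx (G2 lam f g)) (x, 0) := by
    have hev : (pdx fun q => (Fv q).2) =ᶠ[nhds ((x, (0:ℝ)) : ℝ × ℝ)] pdx (G2 lam f g) := by
      filter_upwards [isOpen_U.mem_nhds hxU] with q hq
      exact hpd2 q hq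
    simp only [pdx]
    rw [hev.fderiv_eq]
  have e3 : pdy (pdy fun p => (Fv p).2) (x, 0) = pdy (pdy (G2 lam f g)) (x, 0) := by
    have hev : (pdy fun q => (Fv q).2) =ᶠ[nhds ((x, (0:ℝ)) : ℝ × ℝ)] pdy (G2 lam f g) := by
      filter_upwards [isOpen_U.mem_nhds hxU] with q hq
      exact hpd3 q hq
    simp only [pdy]
    rw [hev.fderiv_eq]
  -- compute the three second derivatives of G1/G2
  have T1 : pdx (pdy (G1 lam f g)) (x, 0) =
      ((x ^ 2 : ℝ) : ℂ) ^ (-lam - 1 - 1) *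
        (pdx (pdy f) (-1 / x, 0) - 2 * (lam + 1) * (x : ℂ) * pdy f (-1 / x, 0)
          - 2 * (x : ℂ) * pdx g (-1 / x, 0)
          + 2 * (2 * lam + 1) * (x : ℂ) ^ 2 * g (-1 / x, 0)) := by
    have hev : (fun a => pdy (G1 lam f g) (a, 0)) =ᶠ[nhds x]
        (fun a : ℝ => ((a ^ 2 : ℝ) : ℂ) ^ (-lam - 1) *
          (pdy f (-1 / a, 0) - 2 * (a : ℂ) * g (-1 / a, 0))) := by
      filter_upwards [isOpen_ne.mem_nhds hx] with a ha
      exact A1 hf' hg' ha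
    have hd := (B1 hf' hg' hx).congr_of_eventuallyEq hev
    exact pdx_eq (diffAt (pd_contDiffOn hG1 (0, 1)) hxU) hd
  have T2 : pdx (pdx (G2 lam f g)) (x, 0) =
      ((x ^ 2 : ℝ) : ℂ) ^ (-lam - 1 - 1) *
        (pdx (pdx g) (-1 / x, 0) - 2 * (2 * lam + 1) * (x : ℂ) * pdx g (-1 / x, 0)
          + 2 * lam * (2 * lam + 1) * (x : ℂ) ^ 2 * g (-1 / x, 0)) := by
    have hev : (fun a => pdx (G2 lam f g) (a, 0)) =ᶠ[nhds x]
        (fun a : ℝ => ((a ^ 2 : ℝ) : ℂ) ^ (-lam - 1) *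
          (-2 * lam * (a : ℂ) * g (-1 / a, 0) + pdx g (-1 / a, 0))) := by
      filter_upwards [isOpen_ne.mem_nhds hx] with a ha
      exact A2 hf' hg' ha
    have hd := (B2 hf' hg' hx).congr_of_eventuallyEq hev
    exact pdx_eq (diffAt (pd_contDiffOn hG2 (1, 0)) hxU) hd
  have T3 : pdy (pdy (G2 lam f g)) (x, 0) =
      ((x ^ 2 : ℝ) : ℂ) ^ (-lam - 1 - 1) *
        (pdy (pdy g) (-1 / x, 0) + 4 * (x : ℂ) * pdy f (-1 / x, 0)
          + 2 * (x : ℂ) * pdx g (-1 / x, 0)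
          - 2 * (lam + 2) * (x : ℂ) ^ 2 * g (-1 / x, 0)) := by
    have hfun : (fun b => pdy (G2 lam f g) (x, b)) = chi lam f g x := by
      funext b
      exact A3 hf' hg' hx b
    have hd : HasDerivAt (fun b => pdy (G2 lam f g) (x, b)) _ 0 := hfun ▸ B3 hf' hg' hx
    exact pdy_eq (diffAt (pd_contDiffOn hG2 (0, 1)) hxU) hd
  -- prefactor identity
  have hpre : ((|x| : ℝ) : ℂ) ^ (-2 * (lam + 2)) = ((x ^ 2 : ℝ) : ℂ) ^ (-lam - 1 - 1) := by
    have h1 := cpow_sq (abs_pos.mpr hx) (-(lam + 2))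
    rw [sq_abs] at h1
    rw [show (-2 : ℂ) * (lam + 2) = 2 * (-(lam + 2)) by ring, ← h1]
    congr 1
    ring
  rw [e1, e2, e3, T1, T2, T3, hpre]
  ring
end
end

section
/- If D = Rest_{y=0} ∘ (D₁, D₂) satisfies the functional identity (D F^∨_λ)(x) = |x|^{-2ν}(D F)(-1/x) for all smooth ℂ²-valued F, then the dual operator D^∨ := Rest_{y=0} ∘ (−D₂, D₁) also satisfies the same functional identity for all such F. -/
/-!
The dual operator is `D` precomposed with the quarter turn `(f, g) ↦ (g, -f)`, and this quarter
turn commutes with the rotation matrices in the twisted inversion. Hence the identity for `D^∨`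
at `F` is the identity for `D` at the rotated function.
-/

noncomputable section

theorem IsTwInv.quarterTurn {lam : ℂ} {F Fv : ℝ × ℝ → ℂ × ℂ} (hF : IsTwInv lam F Fv) :
    IsTwInv lam (fun p => ((F p).2, -(F p).1)) (fun p => ((Fv p).2, -(Fv p).1)) := by
  intro r θ hr
  obtain ⟨h₁, h₂⟩ := Prod.ext_iff.mp (hF r θ hr)
  refine Prod.ext ?_ ?_
  · simp only [h₂, Prod.smul_fst, Prod.smul_snd, smul_eq_mul]
    ring
  · simp only [h₁, Prod.smul_fst, Prod.smul_snd, smul_eq_mul]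
    ring

/-- If `D = Rest_{y=0} ∘ (D₁, D₂)` satisfies the functional identity
`(D F^∨_λ)(x) = |x|^{-2ν} (D F)(-1/x)` for all `F`, then so does
`D^∨ = Rest_{y=0} ∘ (−D₂, D₁)`. -/
theorem dual_operator_satisfies_identity (lam nu : ℂ)
    (D₁ D₂ : ((ℝ × ℝ) → ℂ) →ₗ[ℂ] ((ℝ × ℝ) → ℂ))
    (h : ∀ f g : (ℝ × ℝ) → ℂ, ∀ Fv : ℝ × ℝ → ℂ × ℂ,
      IsTwInv lam (fun p => (f p, g p)) Fv →
      ∀ x : ℝ, x ≠ 0 →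
        D₁ (fun p => (Fv p).1) (x, 0) + D₂ (fun p => (Fv p).2) (x, 0)
          = ((|x| : ℝ) : ℂ) ^ (-2 * nu) * (D₁ f (-1 / x, 0) + D₂ g (-1 / x, 0))) :
    ∀ f g : (ℝ × ℝ) → ℂ, ∀ Fv : ℝ × ℝ → ℂ × ℂ,
      IsTwInv lam (fun p => (f p, g p)) Fv →
      ∀ x : ℝ, x ≠ 0 →
        -(D₂ (fun p => (Fv p).1) (x, 0)) + D₁ (fun p => (Fv p).2) (x, 0)
          = ((|x| : ℝ) : ℂ) ^ (-2 * nu) * (-(D₂ f (-1 / x, 0)) + D₁ g (-1 / x, 0)) := by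
  intro f g Fv hF x hx
  have key := h g (-f) (fun p => ((Fv p).2, -(Fv p).1)) hF.quarterTurn x hx
  rw [show (fun p => -(Fv p).1) = -fun p => (Fv p).1 from rfl, map_neg, map_neg] at key
  simp only [Pi.neg_apply] at key
  linear_combination key
end
end

section
/- The Rankin–Cohen polynomial equals a Jacobi polynomial: RC^{λ₁,λ₂}_a(x,y) = (−1)^a · P^{λ₁−1, −λ₁−λ₂−2a+1}_a(x,y), where P^{α,β}_ℓ(x,y) := y^ℓ · P^{α,β}_ℓ(2x/y + 1) is the homogenization of the Jacobi polynomial. -/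
noncomputable section
open Finset

/-- Generalized binomial coefficient `C(μ, k) = μ(μ−1)⋯(μ−k+1)/k!`. -/
def gbinom (μ : ℂ) (k : ℕ) : ℂ := (∏ i ∈ Finset.range k, (μ - i)) / (k.factorial : ℂ)

/-- Pochhammer symbol `(z)_k = z(z+1)⋯(z+k−1)`. -/
def poch (z : ℂ) (k : ℕ) : ℂ := ∏ i ∈ Finset.range k, (z + i)

/-- The Rankin–Cohen polynomial
`RC^{λ₁,λ₂}_a(x,y) = Σ_{ℓ=0}^{a} (−1)^ℓ C(λ₁+a−1, ℓ) C(λ₂+a−1, a−ℓ) x^{a−ℓ} y^ℓ`. -/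
def RC (a : ℕ) (l1 l2 x y : ℂ) : ℂ :=
  ∑ ℓ ∈ Finset.range (a + 1),
    (-1 : ℂ) ^ ℓ * gbinom (l1 + a - 1) ℓ * gbinom (l2 + a - 1) (a - ℓ) * x ^ (a - ℓ) * y ^ ℓ

/-- The Jacobi polynomial `P^{α,β}_ℓ(t)`, written via Pochhammer symbols:
`P^{α,β}_ℓ(t) = Σ_m (α+m+1)_{ℓ−m}/(ℓ−m)! · (α+β+ℓ+1)_m/m! · ((t−1)/2)^m`. -/
def jacobiP (α β : ℂ) (ℓ : ℕ) (t : ℂ) : ℂ :=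
  ∑ m ∈ Finset.range (ℓ + 1),
    poch (α + m + 1) (ℓ - m) / ((ℓ - m).factorial : ℂ) *
      (poch (α + β + ℓ + 1) m / (m.factorial : ℂ)) * ((t - 1) / 2) ^ m

/-- The homogenized (two-variable) Jacobi polynomial `P^{α,β}_ℓ(x,y) = y^ℓ P^{α,β}_ℓ(2x/y+1)`. -/
def jacobiP2 (α β : ℂ) (ℓ : ℕ) (x y : ℂ) : ℂ :=
  ∑ m ∈ Finset.range (ℓ + 1),
    poch (α + m + 1) (ℓ - m) / ((ℓ - m).factorial : ℂ) *
      (poch (α + β + ℓ + 1) m / (m.factorial : ℂ)) * x ^ m * y ^ (ℓ - m)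

/-- The Gegenbauer polynomial
`C^α_ℓ(t) = Σ_{k=0}^{[ℓ/2]} (−1)^k (α)_{ℓ−k}/((ℓ−2k)! k!) (2t)^{ℓ−2k}`. -/
def gegen (α : ℂ) (ℓ : ℕ) (t : ℂ) : ℂ :=
  ∑ k ∈ Finset.range (ℓ / 2 + 1),
    (-1 : ℂ) ^ k * poch α (ℓ - k) / (((ℓ - 2 * k).factorial : ℂ) * (k.factorial : ℂ)) *
      (2 * t) ^ (ℓ - 2 * k)

/-- The two-variable Gegenbauer polynomial `C^α_ℓ(s,t) = s^{ℓ/2} C^α_ℓ(t/√s)`. -/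
def gegen2 (α : ℂ) (ℓ : ℕ) (s t : ℂ) : ℂ :=
  ∑ k ∈ Finset.range (ℓ / 2 + 1),
    (-1 : ℂ) ^ k * poch α (ℓ - k) / (((ℓ - 2 * k).factorial : ℂ) * (k.factorial : ℂ)) *
      s ^ k * (2 * t) ^ (ℓ - 2 * k)

/-- Gegenbauer polynomial with integer index, with the convention `C^α_{−1} := 0`. -/
def gegenZ (α : ℂ) (n : ℤ) (t : ℂ) : ℂ := if n < 0 then 0 else gegen α n.toNat t

/-- Two-variable Gegenbauer polynomial with integer index, `C^α_{−1} := 0`. -/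
def gegen2Z (α : ℂ) (n : ℤ) (s t : ℂ) : ℂ := if n < 0 then 0 else gegen2 α n.toNat s t

/-!
After reflecting the summation index `ℓ ↦ a − ℓ`, the two sides agree term by term: both
generalized binomial coefficients are Pochhammer symbols over a factorial,
`C(λ₁+a−1, a−m) = (λ₁+m)_{a−m}/(a−m)!` by reversing the product, and
`C(λ₂+a−1, m) = (−1)^m (1−λ₂−a)_m/m!` by negating each factor; the two signs combine to `(−1)^a`.
-/

theorem gbinom_eq_neg_one_pow_mul_poch (μ : ℂ) (k : ℕ) :
    gbinom μ k = (-1) ^ k * poch (-μ) k / k.factorial := by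
  have hneg : ∏ i ∈ range k, (μ - i) = ∏ i ∈ range k, -(-μ + i) :=
    prod_congr rfl fun i _ => by ring
  rw [gbinom, hneg, prod_neg, card_range, poch]

theorem gbinom_add_sub_one (z : ℂ) (k : ℕ) :
    gbinom (z + k - 1) k = poch z k / k.factorial := by
  rw [gbinom, poch, ← prod_range_reflect]
  refine congrArg (· / _) (prod_congr rfl fun i hi => ?_)
  rw [mem_range] at hi
  push_cast [Nat.sub_sub, Nat.cast_sub (show 1 + i ≤ k by omega)]
  ring

/-- The Rankin–Cohen polynomial equals a Jacobi polynomial: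
`RC^{λ₁,λ₂}_a(x,y) = (−1)^a P^{λ₁−1, −λ₁−λ₂−2a+1}_a(x,y)`. -/
theorem RC_eq_jacobi (a : ℕ) (l1 l2 x y : ℂ) :
    RC a l1 l2 x y = (-1 : ℂ) ^ a * jacobiP2 (l1 - 1) (-l1 - l2 - 2 * a + 1) a x y := by
  rw [RC, jacobiP2, mul_sum, ← sum_range_reflect]
  refine sum_congr rfl fun m hm => ?_
  have hm : m ≤ a := Nat.lt_succ_iff.mp (mem_range.mp hm)
  rw [show a + 1 - 1 - m = a - m by omega, Nat.sub_sub_self hm]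
  have hshift : l1 + a - 1 = l1 + m + ((a - m : ℕ) : ℂ) - 1 := by
    push_cast [Nat.cast_sub hm]; ring
  rw [hshift, gbinom_add_sub_one, gbinom_eq_neg_one_pow_mul_poch,
    show l1 - 1 + m + 1 = l1 + m by ring,
    show l1 - 1 + (-l1 - l2 - 2 * a + 1) + a + 1 = -(l2 + a - 1) by ring]
  have hsign : (-1 : ℂ) ^ (a - m) * (-1) ^ m = (-1) ^ a := by
    rw [← pow_add, Nat.sub_add_cancel hm]
  linear_combination hsign * (poch (l1 + m) (a - m) * poch (-(l2 + a - 1)) m * x ^ m *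
    y ^ (a - m) / ((a - m).factorial * m.factorial))
end
end

section
/- Let f₁, f₂ be holomorphic functions on a domain in ℂ, and let ω = f₁(z)f₂(z̄)dz, written as ω = f dx + g dy with f(x,y) = f₁(x+iy)f₂(x−iy) and g = i·f. Let RC^{λ+1,λ−1}_a(x,y) = Σ_ℓ r_ℓ x^{a−ℓ}y^ℓ, and let D₁, D₂ be the real constant-coefficient operators with D₁ + i D₂ = 2^{−a} RC^{λ+1,λ−1}_a(∂/∂x − i∂/∂y, ∂/∂x + i∂/∂y). Then (D₁f)(x,0) + (D₂g)(x,0) = Σ_{ℓ=0}^a r_ℓ · f₁^{(a−ℓ)}(x)·f₂^{(ℓ)}(x) for x real. -/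
/-! With `z = x + iy`, the operators `∂/∂x − i∂/∂y` and `∂/∂x + i∂/∂y` are `2∂/∂z` and `2∂/∂z̄`,
so on `f(x, y) = f₁(z) f₂(z̄)` they act as `2 d/dz` on the first factor, resp. on the second.
Hence `(∂/∂x − i∂/∂y)^(a−ℓ) (∂/∂x + i∂/∂y)^ℓ f = 2^a f₁^(a−ℓ)(z) f₂^(ℓ)(z̄)`, which on the real
axis is `2^a f₁^(a−ℓ)(x) f₂^(ℓ)(x)`; and `g = i f` gives `D₁ f + D₂ g = (D₁ + i D₂) f`. -/

noncomputable section
open Complex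

/-- The Rankin–Cohen coefficient `r_ℓ = (−1)^ℓ C(λ₁+a−1, ℓ) C(λ₂+a−1, a−ℓ)`. -/
def rcCoeff (a : ℕ) (l1 l2 : ℂ) (ℓ : ℕ) : ℂ :=
  (-1 : ℂ) ^ ℓ * gbinom (l1 + a - 1) ℓ * gbinom (l2 + a - 1) (a - ℓ)

/-- The operator `∂/∂x − i ∂/∂y` acting on functions on `ℝ²`. -/
def opA (F : ℝ × ℝ → ℂ) : ℝ × ℝ → ℂ :=
  fun p => fderiv ℝ F p (1, 0) - Complex.I * fderiv ℝ F p (0, 1)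

/-- The operator `∂/∂x + i ∂/∂y` acting on functions on `ℝ²`. -/
def opB (F : ℝ × ℝ → ℂ) : ℝ × ℝ → ℂ :=
  fun p => fderiv ℝ F p (1, 0) + Complex.I * fderiv ℝ F p (0, 1)

open Set Filter Topology ComplexConjugate

def mulConj (φ ψ : ℂ → ℂ) (q : ℝ × ℝ) : ℂ :=
  φ (equivRealProdCLM.symm q) * ψ (conj (equivRealProdCLM.symm q))

section Operators

variable {F G : ℝ × ℝ → ℂ} {p : ℝ × ℝ}

theorem opA_congr (h : F =ᶠ[𝓝 p] G) : opA F p = opA G p := by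
  simp only [opA, h.fderiv_eq]

theorem opB_congr (h : F =ᶠ[𝓝 p] G) : opB F p = opB G p := by
  simp only [opB, h.fderiv_eq]

theorem opA_const_mul (hF : DifferentiableAt ℝ F p) (c : ℂ) :
    opA (fun q => c * F q) p = c * opA F p := by
  simp only [opA, fderiv_const_mul hF, smul_apply, smul_eq_mul]
  ring

theorem opB_const_mul (hF : DifferentiableAt ℝ F p) (c : ℂ) :
    opB (fun q => c * F q) p = c * opB F p := by
  simp only [opB, fderiv_const_mul hF, smul_apply, smul_eq_mul]
  ring

theorem Set.EqOn.opA {s : Set (ℝ × ℝ)} (hs : IsOpen s) (h : EqOn F G s) :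
    EqOn (opA F) (opA G) s := fun _ hp =>
  opA_congr (h.eventuallyEq_of_mem (hs.mem_nhds hp))

theorem Set.EqOn.opB {s : Set (ℝ × ℝ)} (hs : IsOpen s) (h : EqOn F G s) :
    EqOn (opB F) (opB G) s := fun _ hp =>
  opB_congr (h.eventuallyEq_of_mem (hs.mem_nhds hp))

end Operators

theorem Set.EqOn.iterate_of_step {α β : Type*} {s : Set α} {T : (α → β) → α → β}
    (hT : ∀ F G, EqOn F G s → EqOn (T F) (T G) s) {F : α → β} {u : ℕ → α → β}
    (h₀ : EqOn F (u 0) s) (hu : ∀ n, EqOn (T (u n)) (u (n + 1)) s) :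
    ∀ n, EqOn (T^[n] F) (u n) s
  | 0 => h₀
  | n + 1 => by
    rw [Function.iterate_succ_apply']
    exact (hT _ _ (h₀.iterate_of_step hT hu n)).trans (hu n)

section MulConj

variable {φ ψ : ℂ → ℂ} {p : ℝ × ℝ}

theorem hasFDerivAt_mulConj (hφ : DifferentiableAt ℂ φ (equivRealProdCLM.symm p))
    (hψ : DifferentiableAt ℂ ψ (conj (equivRealProdCLM.symm p))) :
    HasFDerivAt (mulConj φ ψ)
      (φ (equivRealProdCLM.symm p) • deriv ψ (conj (equivRealProdCLM.symm p)) •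
          ((conjCLE : ℂ →L[ℝ] ℂ).comp (equivRealProdCLM.symm : ℝ × ℝ →L[ℝ] ℂ)) +
        ψ (conj (equivRealProdCLM.symm p)) • deriv φ (equivRealProdCLM.symm p) •
          (equivRealProdCLM.symm : ℝ × ℝ →L[ℝ] ℂ)) p := by
  have hz := hφ.hasDerivAt.comp_hasFDerivAt p
    (equivRealProdCLM.symm : ℝ × ℝ →L[ℝ] ℂ).hasFDerivAt
  have hw := hψ.hasDerivAt.comp_hasFDerivAt p
    ((conjCLE : ℂ →L[ℝ] ℂ).comp (equivRealProdCLM.symm : ℝ × ℝ →L[ℝ] ℂ)).hasFDerivAt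
  exact hz.mul hw

theorem equivRealProdCLM_symm_mk_zero (x : ℝ) : equivRealProdCLM.symm (x, 0) = x := by
  simp [equivRealProdCLM_symm_apply]

theorem equivRealProdCLM_symm_zero_one : equivRealProdCLM.symm ((0, 1) : ℝ × ℝ) = I := by
  simp [equivRealProdCLM_symm_apply]

theorem opA_mulConj (hφ : DifferentiableAt ℂ φ (equivRealProdCLM.symm p))
    (hψ : DifferentiableAt ℂ ψ (conj (equivRealProdCLM.symm p))) :
    opA (mulConj φ ψ) p = 2 * mulConj (deriv φ) ψ p := by
  simp only [opA, (hasFDerivAt_mulConj hφ hψ).fderiv, mulConj, add_apply, smul_apply,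
    ContinuousLinearMap.comp_apply, ContinuousLinearEquiv.coe_coe, conjCLE_apply,
    equivRealProdCLM_symm_mk_zero, ofReal_one, equivRealProdCLM_symm_zero_one, map_one, conj_I,
    smul_eq_mul]
  linear_combination (φ (equivRealProdCLM.symm p) * deriv ψ (conj (equivRealProdCLM.symm p)) -
    ψ (conj (equivRealProdCLM.symm p)) * deriv φ (equivRealProdCLM.symm p)) * I_sq

theorem opB_mulConj (hφ : DifferentiableAt ℂ φ (equivRealProdCLM.symm p))
    (hψ : DifferentiableAt ℂ ψ (conj (equivRealProdCLM.symm p))) :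
    opB (mulConj φ ψ) p = 2 * mulConj φ (deriv ψ) p := by
  simp only [opB, (hasFDerivAt_mulConj hφ hψ).fderiv, mulConj, add_apply, smul_apply,
    ContinuousLinearMap.comp_apply, ContinuousLinearEquiv.coe_coe, conjCLE_apply,
    equivRealProdCLM_symm_mk_zero, ofReal_one, equivRealProdCLM_symm_zero_one, map_one, conj_I,
    smul_eq_mul]
  linear_combination (ψ (conj (equivRealProdCLM.symm p)) * deriv φ (equivRealProdCLM.symm p) -
    φ (equivRealProdCLM.symm p) * deriv ψ (conj (equivRealProdCLM.symm p))) * I_sq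

theorem mulConj_mk_zero (x : ℝ) : mulConj φ ψ (x, 0) = φ x * ψ x := by
  rw [mulConj, equivRealProdCLM_symm_mk_zero, conj_ofReal]

end MulConj

theorem DifferentiableOn.differentiableAt_iteratedDeriv {U : Set ℂ} {f : ℂ → ℂ}
    (hf : DifferentiableOn ℂ f U) (hU : IsOpen U) (k : ℕ) {z : ℂ} (hz : z ∈ U) :
    DifferentiableAt ℂ (iteratedDeriv k f) z := by
  rw [iteratedDeriv_eq_iterate]
  exact ((hf.analyticOnNhd hU).iterated_deriv k z hz).differentiableAt

theorem eqOn_iterate_opA_iterate_opB_mulConj {U : Set ℂ} (hU : IsOpen U) {f₁ f₂ : ℂ → ℂ}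
    (h₁ : DifferentiableOn ℂ f₁ U) (h₂ : DifferentiableOn ℂ f₂ U) (m n : ℕ) :
    EqOn (opA^[m] (opB^[n] (mulConj f₁ f₂)))
      (fun q => 2 ^ (m + n) * mulConj (iteratedDeriv m f₁) (iteratedDeriv n f₂) q)
      (equivRealProdCLM.symm ⁻¹' (U ∩ conj ⁻¹' U)) := by
  have hV : IsOpen (equivRealProdCLM.symm ⁻¹' (U ∩ conj ⁻¹' U)) :=
    (hU.inter (hU.preimage continuous_conj)).preimage equivRealProdCLM.symm.continuous
  have hB : EqOn (opB^[n] (mulConj f₁ f₂))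
      (fun q => 2 ^ n * mulConj f₁ (iteratedDeriv n f₂) q)
      (equivRealProdCLM.symm ⁻¹' (U ∩ conj ⁻¹' U)) := by
    refine EqOn.iterate_of_step (T := opB)
      (u := fun k q => 2 ^ k * mulConj f₁ (iteratedDeriv k f₂) q)
      (fun _ _ h => h.opB hV) (fun q _ => by simp) (fun k q hq => ?_) n
    have hφ := h₁.differentiableAt (hU.mem_nhds hq.1)
    have hψ := h₂.differentiableAt_iteratedDeriv hU k hq.2
    simp only [opB_const_mul (hasFDerivAt_mulConj hφ hψ).differentiableAt, opB_mulConj hφ hψ,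
      iteratedDeriv_succ]
    ring
  refine EqOn.iterate_of_step (T := opA)
    (u := fun k q => 2 ^ (k + n) * mulConj (iteratedDeriv k f₁) (iteratedDeriv n f₂) q)
    (fun _ _ h => h.opA hV) (by simpa using hB) (fun k q hq => ?_) m
  have hφ := h₁.differentiableAt_iteratedDeriv hU k hq.1
  have hψ := h₂.differentiableAt_iteratedDeriv hU n hq.2
  simp only [opA_const_mul (hasFDerivAt_mulConj hφ hψ).differentiableAt, opA_mulConj hφ hψ,
    iteratedDeriv_succ]
  ring

/-- Lemma on the restriction of the Rankin–Cohen bracket to the real form: if `D₁, D₂` are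
the operators with `D₁ + i D₂ = 2^{−a} RC^{λ+1,λ−1}_a(∂/∂x − i∂/∂y, ∂/∂x + i∂/∂y)`, and
`ω = f₁(z) f₂(z̄) dz = f dx + g dy` (so `f(x,y) = f₁(x+iy) f₂(x−iy)`, `g = i f`), then
`(D₁ f)(x,0) + (D₂ g)(x,0) = Σ_ℓ r_ℓ f₁^{(a−ℓ)}(x) f₂^{(ℓ)}(x)` for real `x`. -/
theorem rankin_cohen_restriction (a : ℕ) (lam : ℂ) (U : Set ℂ) (hU : IsOpen U)
    (f₁ f₂ : ℂ → ℂ) (h₁ : DifferentiableOn ℂ f₁ U) (h₂ : DifferentiableOn ℂ f₂ U)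
    (D₁ D₂ : ((ℝ × ℝ) → ℂ) →ₗ[ℂ] ((ℝ × ℝ) → ℂ))
    (hD : ∀ F : (ℝ × ℝ) → ℂ,
      D₁ F + Complex.I • D₂ F =
        ((2 : ℂ) ^ a)⁻¹ • ∑ ℓ ∈ Finset.range (a + 1),
          rcCoeff a (lam + 1) (lam - 1) ℓ • opA^[a - ℓ] (opB^[ℓ] F))
    (f g : (ℝ × ℝ) → ℂ)
    (hf : f = fun p : ℝ × ℝ => f₁ ((p.1 : ℂ) + p.2 * Complex.I) *
      f₂ ((p.1 : ℂ) - p.2 * Complex.I))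
    (hg : g = fun p => Complex.I * f p)
    (x : ℝ) (hx : (x : ℂ) ∈ U) :
    D₁ f (x, 0) + D₂ g (x, 0)
      = ∑ ℓ ∈ Finset.range (a + 1),
          rcCoeff a (lam + 1) (lam - 1) ℓ * iteratedDeriv (a - ℓ) f₁ (x : ℂ) *
            iteratedDeriv ℓ f₂ (x : ℂ) := by
  have hfg : D₁ f (x, 0) + D₂ g (x, 0) = (D₁ f + I • D₂ f) (x, 0) := by
    rw [show g = I • f by rw [hg]; rfl, map_smul]; rfl
  have hf' : f = mulConj f₁ f₂ := by
    rw [hf]; funext p; simp [mulConj, equivRealProdCLM_symm_apply, sub_eq_add_neg]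
  have hx' : ((x, 0) : ℝ × ℝ) ∈ equivRealProdCLM.symm ⁻¹' (U ∩ conj ⁻¹' U) := by
    simpa [equivRealProdCLM_symm_mk_zero] using hx
  rw [hfg, hD f, hf']
  simp only [Pi.smul_apply, Finset.sum_apply, smul_eq_mul, Finset.mul_sum]
  refine Finset.sum_congr rfl fun ℓ hℓ => ?_
  rw [eqOn_iterate_opA_iterate_opB_mulConj hU h₁ h₂ (a - ℓ) ℓ hx',
    Nat.sub_add_cancel (Finset.mem_range_succ_iff.mp hℓ)]
  simp only [mulConj_mk_zero]
  field_simp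
end
end
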